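/- arXiv:1210.4197 — 9 statements merged into one kernel-verified Lean document; each statement's English description precedes it below -/
import Mathlib

section
/- Let R be a commutative ring, r a natural number, M an R-module with an ordered R-basis v of length 2r, and A an alternating 2r×2r matrix over R. Set σ := Σ_{i<j} A_{ij} · v_i ∧ v_j in ∧²M. Then the r-th wedge power satisfies σ^{∧r} = r!·Pf(A) · v_0 ∧ … ∧ v_{2r−1} in ∧^{2r}M. -/
open scoped Classical
open Matrix

/-- A permutation `π` of `Fin n` encodes a perfect matching (together with an ordering of the
pairs) when `π(2k) < π(2k+1)` for each pair and `π(0) < π(2) < … < π(n−2)`. -/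
def IsMatchingPerm {n : ℕ} (π : Equiv.Perm (Fin n)) : Prop :=
  (∀ k : ℕ, (h : 2 * k + 1 < n) → π ⟨2 * k, by omega⟩ < π ⟨2 * k + 1, h⟩) ∧
  (∀ k : ℕ, (h : 2 * k + 3 < n) → π ⟨2 * k, by omega⟩ < π ⟨2 * k + 2, by omega⟩)

/-- The Pfaffian of an `n × n` matrix over a commutative ring `R`. -/
noncomputable def Matrix.pfaffian {R : Type*} [CommRing R] {n : ℕ}
    (A : Matrix (Fin n) (Fin n) R) : R :=
  if hn : Even n then
    ∑ π ∈ Finset.univ.filter (fun π : Equiv.Perm (Fin n) => IsMatchingPerm π),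
      (Equiv.Perm.sign π : ℤ) •
        ∏ k ∈ (Finset.range (n / 2)).attach,
          A (π ⟨2 * k.1, by
                have hk := Finset.mem_range.mp k.2; rcases hn with ⟨m, hm⟩; omega⟩)
            (π ⟨2 * k.1 + 1, by
                have hk := Finset.mem_range.mp k.2; rcases hn with ⟨m, hm⟩; omega⟩)
  else 0

/-!
Expanding `σ ^ r` multilinearly gives a sum over all `g : Fin (2r) → Fin (2r)` of
`∏ₖ [g (2k) < g (2k+1)] A (g (2k)) (g (2k+1)) • v (g 0) ∧ ⋯ ∧ v (g (2r-1))`. Non-injective `g`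
contribute nothing, and a permutation `π` contributes `sign π` times the top wedge. A permutation
with increasing pairs is uniquely `τ * ρ̂` with `τ` a matching permutation and `ρ̂` the sign-one
permutation moving the pairs `{2k, 2k+1}` according to some `ρ ∈ S_r` (sort the pairs by their
first entries), and the summand only depends on `τ`: this accounts for the factor `r!`.
-/

open Equiv Finset

def finPairEquiv (r : ℕ) : Fin r × Fin 2 ≃ Fin (2 * r) :=
  finProdFinEquiv.trans (finCongr (mul_comm r 2))

@[simp]
lemma finPairEquiv_apply_val {r : ℕ} (k : Fin r) (b : Fin 2) :
    (finPairEquiv r (k, b) : ℕ) = 2 * k + b := by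
  simp only [finPairEquiv, trans_apply, finCongr_apply, Fin.val_cast, finProdFinEquiv_apply_val]
  ring

lemma mk_eq_finPairEquiv {r n : ℕ} (h : n < 2 * r) (k : Fin r) (b : Fin 2)
    (hn : n = 2 * k + b) : (⟨n, h⟩ : Fin (2 * r)) = finPairEquiv r (k, b) :=
  Fin.ext (by simp [hn])

lemma List.prod_ofFn_finPairEquiv {N : Type*} [Monoid N] {r : ℕ} (y : Fin (2 * r) → N) :
    (List.ofFn fun k => y (finPairEquiv r (k, 0)) * y (finPairEquiv r (k, 1))).prod =
      (List.ofFn y).prod := by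
  rw [List.ofFn_mul', List.prod_flatten, List.map_ofFn]
  congr 1
  refine List.ofFn_inj.mpr (funext fun k => ?_)
  simp only [List.ofFn_succ, List.ofFn_zero, Function.comp_apply, List.prod_cons, List.prod_nil,
    mul_one]
  congr 2 <;> ext <;> simp

def finPairArrowEquiv (r : ℕ) (α : Type*) : (Fin (2 * r) → α) ≃ (Fin r → α × α) :=
  ((finPairEquiv r).arrowCongr (Equiv.refl α)).symm.trans
    ((Equiv.curry _ _ _).trans (Equiv.piCongrRight fun _ => finTwoArrowEquiv α))

@[simp]
lemma finPairArrowEquiv_apply {r : ℕ} {α : Type*} (g : Fin (2 * r) → α) (k : Fin r) :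
    finPairArrowEquiv r α g k = (g (finPairEquiv r (k, 0)), g (finPairEquiv r (k, 1))) :=
  rfl

lemma AlternatingMap.sum_smul_map_comp {R M N ι : Type*} [CommRing R] [AddCommGroup M]
    [Module R M] [AddCommGroup N] [Module R N] [Fintype ι] [DecidableEq ι]
    (f : M [⋀^ι]→ₗ[R] N) (v : ι → M) (c : (ι → ι) → R) :
    ∑ g : ι → ι, c g • f (v ∘ g) = (∑ σ : Perm ι, Perm.sign σ • c σ) • f v := by
  calc ∑ g : ι → ι, c g • f (v ∘ g) = ∑ g : ι → ι with Function.Bijective g, c g • f (v ∘ g) := by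
        refine (sum_subset (filter_subset _ _) fun g _ hg => ?_).symm
        rw [mem_filter_univ, ← Finite.injective_iff_bijective] at hg
        rw [f.map_eq_zero_of_not_injective _ fun h => hg h.of_comp, smul_zero]
    _ = ∑ σ : Perm ι, c σ • f (v ∘ σ) :=
        sum_bij (fun g hg ↦ Equiv.ofBijective g (mem_filter.1 hg).2) (fun _ _ ↦ mem_univ _)
          (fun _ _ _ _ h ↦ by injection h)
          (fun σ _ ↦ ⟨σ, mem_filter.2 ⟨mem_univ _, σ.bijective⟩, coe_fn_injective rfl⟩)
          fun _ _ ↦ rfl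
    _ = _ := by
        simp_rw [f.map_perm, smul_comm (c _), sum_smul, smul_assoc]

theorem ExteriorAlgebra.sum_smul_ι_mul_ι_pow {R M κ : Type*} [CommRing R] [AddCommGroup M]
    [Module R M] [Fintype κ] (c : κ → κ → R) (v : κ → M) (r : ℕ) :
    (∑ i, ∑ j, c i j • (ExteriorAlgebra.ι R (v i) * ExteriorAlgebra.ι R (v j))) ^ r =
      ∑ g : Fin (2 * r) → κ, (∏ k, c (g (finPairEquiv r (k, 0))) (g (finPairEquiv r (k, 1)))) •
        ιMulti R (2 * r) (v ∘ g) := by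
  rw [← Fintype.sum_prod_type', ← MultilinearMap.mkPiAlgebraFin_apply_const (R := R),
    MultilinearMap.map_sum, ← (finPairArrowEquiv r κ).sum_comp]
  refine sum_congr rfl fun g _ => ?_
  rw [MultilinearMap.map_smul_univ, MultilinearMap.mkPiAlgebraFin_apply, ιMulti_apply]
  simp only [finPairArrowEquiv_apply, Function.comp_apply]
  rw [← List.prod_ofFn_finPairEquiv]

def blockPerm (r : ℕ) : Perm (Fin r) →* Perm (Fin (2 * r)) where
  toFun ρ := (finPairEquiv r).permCongr (Equiv.prodCongrLeft fun _ => ρ)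
  map_one' := by ext x; obtain ⟨⟨k, b⟩, rfl⟩ := (finPairEquiv r).surjective x; simp
  map_mul' ρ ρ' := by
    ext x; obtain ⟨⟨k, b⟩, rfl⟩ := (finPairEquiv r).surjective x; simp

@[simp]
lemma blockPerm_apply {r : ℕ} (ρ : Perm (Fin r)) (k : Fin r) (b : Fin 2) :
    blockPerm r ρ (finPairEquiv r (k, b)) = finPairEquiv r (ρ k, b) := by
  simp [blockPerm, Equiv.permCongr_apply]

@[simp]
lemma sign_blockPerm {r : ℕ} (ρ : Perm (Fin r)) : Perm.sign (blockPerm r ρ) = 1 := by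
  simp [blockPerm, Perm.sign_permCongr, Perm.sign_prodCongrLeft, Int.units_sq]

lemma Tuple.sort_comp_perm {n : ℕ} {α : Type*} [LinearOrder α] {f : Fin n → α}
    (hf : StrictMono f) (ρ : Perm (Fin n)) : Tuple.sort (f ∘ ρ) = ρ⁻¹ := by
  refine (Tuple.eq_sort_iff.mpr ⟨?_, fun i j hij h => ?_⟩).symm
  · simpa [Function.comp_def] using hf.monotone
  · simp only [Perm.coe_inv, Function.comp_apply, apply_symm_apply, hf.injective.eq_iff] at h
    exact absurd h hij.ne

lemma isMatchingPerm_iff {r : ℕ} (π : Perm (Fin (2 * r))) :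
    IsMatchingPerm π ↔ (∀ k, π (finPairEquiv r (k, 0)) < π (finPairEquiv r (k, 1))) ∧
      StrictMono fun k => π (finPairEquiv r (k, 0)) := by
  cases r with
  | zero => simp [IsMatchingPerm, Subsingleton.strictMono]
  | succ r =>
    rw [Fin.strictMono_iff_lt_succ]
    constructor
    · rintro ⟨hpair, hfirst⟩
      refine ⟨fun k => ?_, fun k => ?_⟩
      · have := hpair k (by omega)
        rwa [mk_eq_finPairEquiv _ k 0 (by simp), mk_eq_finPairEquiv _ k 1 (by simp)] at this
      · have := hfirst k (by omega)
        rwa [mk_eq_finPairEquiv _ k.castSucc 0 (by simp),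
          mk_eq_finPairEquiv _ k.succ 0 (by simp; ring)] at this
    · rintro ⟨hpair, hfirst⟩
      refine ⟨fun k hk => ?_, fun k hk => ?_⟩
      · rw [mk_eq_finPairEquiv _ ⟨k, by omega⟩ 0 (by simp),
          mk_eq_finPairEquiv _ ⟨k, by omega⟩ 1 (by simp)]
        exact hpair _
      · rw [mk_eq_finPairEquiv _ (⟨k, by omega⟩ : Fin r).castSucc 0 (by simp),
          mk_eq_finPairEquiv _ (⟨k, by omega⟩ : Fin r).succ 0 (by simp; ring)]
        exact hfirst _

section Pairing

variable {r : ℕ}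

lemma isMatchingPerm_mul_blockPerm_sort {π : Perm (Fin (2 * r))}
    (hπ : ∀ k, π (finPairEquiv r (k, 0)) < π (finPairEquiv r (k, 1))) :
    IsMatchingPerm (π * blockPerm r (Tuple.sort fun k => π (finPairEquiv r (k, 0)))) := by
  simp only [isMatchingPerm_iff, Perm.mul_apply, blockPerm_apply]
  refine ⟨fun k => hπ _,
    (Tuple.monotone_sort fun k => π (finPairEquiv r (k, 0))).strictMono_of_injective ?_⟩
  exact π.injective.comp <| (finPairEquiv r).injective.comp <|
    (Prod.mk_left_injective 0).comp (Equiv.injective _)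

lemma sort_mul_blockPerm {τ : Perm (Fin (2 * r))} (hτ : IsMatchingPerm τ) (ρ : Perm (Fin r)) :
    Tuple.sort (fun k => (τ * blockPerm r ρ) (finPairEquiv r (k, 0))) = ρ⁻¹ := by
  simp only [Perm.mul_apply, blockPerm_apply]
  exact Tuple.sort_comp_perm ((isMatchingPerm_iff τ).1 hτ).2 ρ

theorem sum_pairIncreasing_eq_factorial_smul {β : Type*} [AddCommMonoid β]
    (w : Perm (Fin (2 * r)) → β) (hw : ∀ π ρ, w (π * blockPerm r ρ) = w π) :
    ∑ π with ∀ k, π (finPairEquiv r (k, 0)) < π (finPairEquiv r (k, 1)), w π =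
      r.factorial • ∑ τ with IsMatchingPerm τ, w τ := by
  calc _ = ∑ p ∈ ({τ | IsMatchingPerm τ} : Finset _) ×ˢ (univ : Finset (Perm (Fin r))),
        w (p.1 * blockPerm r p.2) := by
        refine (sum_nbij' (fun p => p.1 * blockPerm r p.2)
          (fun π => (π * blockPerm r (Tuple.sort fun k => π (finPairEquiv r (k, 0))),
            (Tuple.sort fun k => π (finPairEquiv r (k, 0)))⁻¹)) ?_ ?_ ?_ ?_ fun _ _ => rfl).symm
        · rintro ⟨τ, ρ⟩ hp
          simp only [mem_product, mem_filter, mem_univ, true_and, and_true] at hp ⊢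
          intro k
          simpa only [Perm.mul_apply, blockPerm_apply] using
            ((isMatchingPerm_iff τ).1 hp).1 (ρ k)
        · intro π hπ
          simp only [mem_product, mem_filter, mem_univ, true_and, and_true] at hπ ⊢
          exact isMatchingPerm_mul_blockPerm_sort hπ
        · rintro ⟨τ, ρ⟩ hp
          simp only [mem_product, mem_filter, mem_univ, true_and, and_true] at hp
          rw [sort_mul_blockPerm hp, mul_assoc, ← map_mul, mul_inv_cancel, map_one, mul_one,
            inv_inv]
        · intro π _
          rw [mul_assoc, ← map_mul, mul_inv_cancel, map_one, mul_one]
    _ = _ := by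
        simp only [sum_product, hw, sum_const, card_univ, Fintype.card_perm, Fintype.card_fin,
          smul_sum]

end Pairing

namespace Matrix

variable {R : Type*} [CommRing R] {r : ℕ}

lemma pfaffian_eq_sum (A : Matrix (Fin (2 * r)) (Fin (2 * r)) R) :
    A.pfaffian = ∑ τ with IsMatchingPerm τ,
      (Perm.sign τ : ℤ) • ∏ k, A (τ (finPairEquiv r (k, 0))) (τ (finPairEquiv r (k, 1))) := by
  rw [pfaffian, dif_pos (even_two_mul r)]
  refine sum_congr rfl fun τ _ => congrArg _ ?_
  refine prod_bij' (fun k _ => ⟨k, by simpa using mem_range.1 k.2⟩)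
    (fun k _ => ⟨k, mem_range.2 (by omega)⟩) (fun _ _ => mem_univ _) (fun _ _ => mem_attach _ _)
    (fun _ _ => rfl) (fun _ _ => rfl) fun k _ => ?_
  rw [mk_eq_finPairEquiv _ ⟨k, _⟩ 0 (by simp), mk_eq_finPairEquiv _ ⟨k, _⟩ 1 (by simp)]

theorem factorial_mul_pfaffian (A : Matrix (Fin (2 * r)) (Fin (2 * r)) R) :
    (r.factorial : R) * A.pfaffian =
      ∑ π with ∀ k, π (finPairEquiv r (k, 0)) < π (finPairEquiv r (k, 1)),
        (Perm.sign π : ℤ) • ∏ k, A (π (finPairEquiv r (k, 0))) (π (finPairEquiv r (k, 1))) := by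
  rw [sum_pairIncreasing_eq_factorial_smul, pfaffian_eq_sum, nsmul_eq_mul]
  intro π ρ
  simp only [Perm.sign_mul, sign_blockPerm, mul_one, Perm.mul_apply, blockPerm_apply]
  rw [Equiv.prod_comp ρ fun k => A (π (finPairEquiv r (k, 0))) (π (finPairEquiv r (k, 1)))]

end Matrix

theorem wedge_pow_eq_pfaffian_general {R : Type*} [CommRing R] (r : ℕ)
    (M : Type*) [AddCommGroup M] [Module R M] (v : Module.Basis (Fin (2 * r)) R M)
    (A : Matrix (Fin (2 * r)) (Fin (2 * r)) R) :
    (∑ p ∈ Finset.univ.filter (fun p : Fin (2 * r) × Fin (2 * r) => p.1 < p.2),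
        A p.1 p.2 • (ExteriorAlgebra.ι R (v p.1) * ExteriorAlgebra.ι R (v p.2))) ^ r =
      ((r.factorial : R) * A.pfaffian) •
        ((List.finRange (2 * r)).map fun i => ExteriorAlgebra.ι R (v i)).prod := by
  have hσ : ∑ p ∈ Finset.univ.filter (fun p : Fin (2 * r) × Fin (2 * r) => p.1 < p.2),
        A p.1 p.2 • (ExteriorAlgebra.ι R (v p.1) * ExteriorAlgebra.ι R (v p.2)) =
      ∑ i, ∑ j, (if i < j then A i j else 0) •
        (ExteriorAlgebra.ι R (v i) * ExteriorAlgebra.ι R (v j)) := by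
    rw [sum_filter, ← Fintype.sum_prod_type']
    simp_rw [ite_smul, zero_smul]
  rw [hσ, ExteriorAlgebra.sum_smul_ι_mul_ι_pow, AlternatingMap.sum_smul_map_comp]
  rw [Matrix.factorial_mul_pfaffian, ExteriorAlgebra.ιMulti_apply, List.ofFn_eq_map, sum_filter]
  congr 1
  refine sum_congr rfl fun σ _ => ?_
  rw [Fintype.prod_ite_zero, smul_ite, smul_zero, Units.smul_def]
  congr

/-- Let `R` be a commutative ring, `r` a natural number, `M` an `R`-module
with an ordered `R`-basis `v` of length `2r`, and `A` an alternating `2r × 2r` matrix over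
`R`.  Set `σ := Σ_{i<j} A_{ij} · v_i ∧ v_j` (in the exterior algebra of `M`).  Then
`σ^r = r! · Pf(A) · v_0 ∧ … ∧ v_{2r−1}`. -/
theorem wedge_pow_eq_pfaffian {R : Type*} [CommRing R] (r : ℕ)
    (M : Type*) [AddCommGroup M] [Module R M] (v : Module.Basis (Fin (2 * r)) R M)
    (A : Matrix (Fin (2 * r)) (Fin (2 * r)) R) (hAt : Aᵀ = -A) (hAd : ∀ i, A i i = 0) :
    (∑ p ∈ Finset.univ.filter (fun p : Fin (2 * r) × Fin (2 * r) => p.1 < p.2),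
        A p.1 p.2 • (ExteriorAlgebra.ι R (v p.1) * ExteriorAlgebra.ι R (v p.2))) ^ r =
      ((r.factorial : R) * A.pfaffian) •
        ((List.finRange (2 * r)).map fun i => ExteriorAlgebra.ι R (v i)).prod :=
  wedge_pow_eq_pfaffian_general r M v A
end

section
/- Let K be a field of characteristic zero, r a natural number, M a K-vector space with an ordered basis v of length 2r, and A an alternating 2r×2r matrix over K. Set σ := Σ_{i<j} A_{ij} · v_i ∧ v_j. Then A is invertible if and only if σ^{∧r} ≠ 0 in ∧^{2r}M. -/
/-!
Write `σ` for the 2-vector of `A`. Contraction `f⌋·` with a linear form obeys the Leibniz rule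
`f⌋(x * y) = f⌋x * y + x * f⌋y` for `x` of degree 2, and such `x` commute with vectors; so
`f⌋σ = ι w` gives `f⌋σ^(n+1) = (n+1) • ι w * σ^n`. Moreover `f⌋σ = ι w` where `w` has
coordinates `c ᵥ* A`, `c` being the coordinates of `f`.

If `A` is singular, some `f ≠ 0` has `f⌋σ = 0`, hence `f⌋σ^r = 0`. As `σ^r` has top degree,
`ι m * σ^r = 0`, so `f m • σ^r = ι m * (f⌋σ^r) = 0` for every `m`, and `σ^r = 0`.

If `A` is invertible, every basis vector `v j` is `f⌋σ` for some `f`. If `σ^(n+1) = 0` with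
`n < r`, contracting shows `ι (v j) * σ^n = 0` for all `j`. Peeling off one basis vector at a
time with the coordinate forms, such an element is a scalar multiple of `v₀ ∧ ⋯ ∧ v_{2r-1}`,
hence of degree `2r`, which forces `σ^n = 0` as `2n < 2r`. Induction from `σ^0 = 1` gives
`σ^r ≠ 0`.
-/

open scoped Classical
open Matrix

open CliffordAlgebra Module

open Finset in
theorem Finset.sum_filter_lt_add_swap {I X : Type*} [LinearOrder I] [Fintype I] [AddCommMonoid X]
    (g : I × I → X) (hg : ∀ i, g (i, i) = 0) :
    ∑ p ∈ univ.filter (fun p : I × I => p.1 < p.2), (g p + g p.swap) = ∑ p, g p := by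
  have hswap : ∑ p ∈ univ.filter (fun p : I × I => p.1 < p.2), g p.swap =
      ∑ p ∈ univ.filter (fun p : I × I => p.2 < p.1), g p :=
    sum_equiv (Equiv.prodComm I I) (by simp) (by simp)
  have hdiag : ∑ p ∈ univ.filter (fun p : I × I => p.2 < p.1), g p =
      ∑ p ∈ univ.filter (fun p : I × I => ¬p.1 < p.2), g p := by
    refine sum_subset (fun p => by simpa using le_of_lt) fun p hp hpn => ?_
    simp only [mem_filter, mem_univ, true_and, not_lt] at hp hpn
    rw [← Prod.mk.eta (p := p), le_antisymm hpn hp, hg]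
  rw [sum_add_distrib, hswap, hdiag, sum_filter_add_sum_filter_not]

namespace ExteriorAlgebra

section CommRing

variable {R M : Type*} [CommRing R] [AddCommGroup M] [Module R M] {n : ℕ}

theorem ι_mem_exteriorPower_one (m : M) : ι R m ∈ ⋀[R]^1 M := by
  simpa only [pow_one] using LinearMap.mem_range_self _ m

theorem ι_mul_ι_commute (a b m : M) : Commute (ι R a * ι R b) (ι R m) := by
  have anti (x y : M) : ι R x * ι R y = -(ι R y * ι R x) :=
    eq_neg_of_add_eq_zero_left (ι_add_mul_swap x y)
  rw [Commute, SemiconjBy, mul_assoc, anti b, mul_neg, ← mul_assoc, anti a, neg_mul, neg_neg,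
    mul_assoc]

theorem contractLeft_ι_mul_ι_mul (f : Dual R M) (a b : M) (y : ExteriorAlgebra R M) :
    contractLeft f (ι R a * ι R b * y) =
      contractLeft f (ι R a * ι R b) * y + ι R a * ι R b * contractLeft f y := by
  simp only [mul_assoc, contractLeft_ι_mul, contractLeft_ι, mul_sub, sub_mul,
    smul_mul_assoc, mul_smul_comm, ← Algebra.commutes, ← Algebra.smul_def]
  abel

@[elab_as_elim]
theorem exteriorPower_two_induction_on {P : ExteriorAlgebra R M → Prop}
    (mul : ∀ a b, P (ι R a * ι R b)) (add : ∀ x y, P x → P y → P (x + y))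
    {x : ExteriorAlgebra R M} (hx : x ∈ ⋀[R]^2 M) : P x := by
  rw [exteriorPower, pow_two] at hx
  refine Submodule.mul_induction_on hx ?_ add
  rintro _ ⟨a, rfl⟩ _ ⟨b, rfl⟩
  exact mul a b

theorem commute_ι_of_mem_exteriorPower_two {x : ExteriorAlgebra R M} (hx : x ∈ ⋀[R]^2 M)
    (m : M) : Commute x (ι R m) :=
  exteriorPower_two_induction_on (fun a b => ι_mul_ι_commute a b m)
    (fun _ _ => Commute.add_left) hx

theorem contractLeft_mul_of_mem_exteriorPower_two {x : ExteriorAlgebra R M}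
    (hx : x ∈ ⋀[R]^2 M) (f : Dual R M) (y : ExteriorAlgebra R M) :
    contractLeft f (x * y) = contractLeft f x * y + x * contractLeft f y := by
  refine exteriorPower_two_induction_on (fun a b => contractLeft_ι_mul_ι_mul f a b y) ?_ hx
  intro x x' hx hx'
  simp only [add_mul, map_add, hx, hx']
  abel

theorem contractLeft_pow_succ_of_mem_exteriorPower_two {x : ExteriorAlgebra R M}
    (hx : x ∈ ⋀[R]^2 M) {f : Dual R M} {w : M} (hf : contractLeft f x = ι R w) (n : ℕ) :
    contractLeft f (x ^ (n + 1)) = ((n + 1 : ℕ) : R) • (ι R w * x ^ n) := by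
  induction n with
  | zero => simp [hf]
  | succ n ih =>
    rw [pow_succ' x (n + 1), contractLeft_mul_of_mem_exteriorPower_two hx, ih, hf, mul_smul_comm,
      ← mul_assoc, (commute_ι_of_mem_exteriorPower_two hx w).eq, mul_assoc, ← pow_succ']
    push_cast
    module

theorem contractLeft_pow_eq_zero_of_mem_exteriorPower_two {x : ExteriorAlgebra R M}
    (hx : x ∈ ⋀[R]^2 M) {f : Dual R M} (hf : contractLeft f x = 0) (n : ℕ) :
    contractLeft f (x ^ n) = 0 := by
  induction n with
  | zero => simp
  | succ n ih =>
    rw [pow_succ', contractLeft_mul_of_mem_exteriorPower_two hx, hf, ih, zero_mul, mul_zero,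
      add_zero]

theorem smul_eq_ι_mul_contractLeft {m : M} {x : ExteriorAlgebra R M} (h : ι R m * x = 0)
    (f : Dual R M) : f m • x = ι R m * contractLeft f x := by
  have := congrArg (contractLeft f) h
  rwa [contractLeft_ι_mul, map_zero, sub_eq_zero] at this

theorem exists_eq_prod_mul_of_forall_ι_mul_eq_zero {I : Type*} (b : Basis I R M) {l : List I}
    (hl : l.Nodup) {x : ExteriorAlgebra R M} (hx : ∀ i ∈ l, ι R (b i) * x = 0) :
    ∃ y, x = (l.map fun i => ι R (b i)).prod * y := by
  induction l generalizing x with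
  | nil => exact ⟨x, by simp⟩
  | cons i l ih =>
    obtain ⟨hil, hl⟩ := List.nodup_cons.mp hl
    have hx_eq : x = ι R (b i) * contractLeft (b.coord i) x := by
      simpa using smul_eq_ι_mul_contractLeft (hx i List.mem_cons_self) (b.coord i)
    have hkill : ∀ j ∈ l, ι R (b j) * contractLeft (b.coord i) x = 0 := fun j hj => by
      have hij : i ≠ j := fun h => hil (h ▸ hj)
      simpa [Basis.coord_apply, Finsupp.single_apply, hij] using
        (smul_eq_ι_mul_contractLeft (hx j (List.mem_cons_of_mem i hj)) (b.coord i)).symm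
    obtain ⟨y, hy⟩ := ih hl hkill
    exact ⟨y, by rw [hx_eq, hy, List.map_cons, List.prod_cons, mul_assoc]⟩

theorem mul_eq_algebraMapInv_smul {a : ExteriorAlgebra R M} (ha : ∀ m, a * ι R m = 0)
    (x : ExteriorAlgebra R M) : a * x = algebraMapInv x • a := by
  induction x using ExteriorAlgebra.induction with
  | algebraMap r => rw [← Algebra.commutes, ← Algebra.smul_def, algebraMap_leftInverse M r]
  | ι m => simp [ha, algebraMapInv]
  | mul x y hx hy => rw [← mul_assoc, hx, smul_mul_assoc, hy, smul_smul, map_mul]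
  | add x y hx hy => rw [mul_add, hx, hy, map_add, add_smul]

theorem exteriorPower_eq_bot_of_card_lt {I : Type*} [Finite I] (b : Basis I R M)
    (hn : Nat.card I < n) : ⋀[R]^n M = ⊥ := by
  let : LinearOrder I := linearOrderOfSTO WellOrderingRel
  have : IsEmpty (Set.powersetCard I n) := by simp [hn]
  have := (b.exteriorPower n).repr.toEquiv.subsingleton
  exact Submodule.eq_bot_of_subsingleton

theorem ιMulti_mul_ι (b : Basis (Fin n) R M) (m : M) : ιMulti R n b * ι R m = 0 := by
  have hmem : ιMulti R n b * ι R m ∈ ⋀[R]^(n + 1) M :=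
    SetLike.mul_mem_graded (ιMulti_range R n ⟨b, rfl⟩) (ι_mem_exteriorPower_one m)
  rwa [exteriorPower_eq_bot_of_card_lt b (by simp), Submodule.mem_bot] at hmem

theorem ι_mul_eq_zero_of_mem_exteriorPower_card (b : Basis (Fin n) R M) {x : ExteriorAlgebra R M}
    (hx : x ∈ ⋀[R]^n M) (m : M) : ι R m * x = 0 := by
  have hmem : ι R m * x ∈ ⋀[R]^(1 + n) M := SetLike.mul_mem_graded (ι_mem_exteriorPower_one m) hx
  rwa [exteriorPower_eq_bot_of_card_lt b (by simp), Submodule.mem_bot] at hmem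

theorem eq_zero_of_forall_ι_mul_eq_zero (b : Basis (Fin n) R M) {k : ℕ} (hk : k ≠ n)
    {x : ExteriorAlgebra R M} (hx : x ∈ ⋀[R]^k M) (h : ∀ i, ι R (b i) * x = 0) : x = 0 := by
  obtain ⟨y, rfl⟩ := exists_eq_prod_mul_of_forall_ι_mul_eq_zero b (List.nodup_finRange n)
    fun i _ => h i
  rw [← List.ofFn_eq_map, ← ιMulti_apply, mul_eq_algebraMapInv_smul (ιMulti_mul_ι b)] at hx ⊢
  by_contra hne
  exact hk (DirectSum.degree_eq_of_mem_mem (fun i : ℕ => ⋀[R]^i M) hx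
    (Submodule.smul_mem _ _ (ιMulti_range R n ⟨b, rfl⟩)) hne)

theorem smul_eq_zero_of_contractLeft_eq_zero (b : Basis (Fin n) R M) {x : ExteriorAlgebra R M}
    (hx : x ∈ ⋀[R]^n M) {f : Dual R M} (hf : contractLeft f x = 0) (m : M) : f m • x = 0 := by
  rw [smul_eq_ι_mul_contractLeft (ι_mul_eq_zero_of_mem_exteriorPower_card b hx m), hf, mul_zero]

theorem pow_mem_exteriorPower_two_mul {x : ExteriorAlgebra R M} (hx : x ∈ ⋀[R]^2 M) (n : ℕ) :
    x ^ n ∈ ⋀[R]^(2 * n) M := by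
  simpa [mul_comm] using SetLike.pow_mem_graded n hx

end CommRing

theorem pow_ne_zero_of_forall_contractLeft_eq_ι {K M : Type*} [Field K] [CharZero K]
    [AddCommGroup M] [Module K M] {N : ℕ} (b : Basis (Fin N) K M) {x : ExteriorAlgebra K M}
    (hx : x ∈ ⋀[K]^2 M) (hb : ∀ i, ∃ f : Dual K M, contractLeft f x = ι K (b i)) {n : ℕ}
    (hn : 2 * n ≤ N) : x ^ n ≠ 0 := by
  induction n with
  | zero => simp
  | succ n ih =>
    intro hzero
    refine ih (by omega) (eq_zero_of_forall_ι_mul_eq_zero b (k := 2 * n) (by omega) ?_ fun i => ?_)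
    · exact pow_mem_exteriorPower_two_mul hx n
    · obtain ⟨f, hf⟩ := hb i
      have := contractLeft_pow_succ_of_mem_exteriorPower_two hx hf n
      rw [hzero, map_zero, eq_comm, smul_eq_zero] at this
      exact this.resolve_left (Nat.cast_ne_zero.mpr n.succ_ne_zero)

end ExteriorAlgebra

namespace Matrix

variable {I R M : Type*} [LinearOrder I] [Fintype I] [CommRing R] [AddCommGroup M] [Module R M]

noncomputable def toTwoVector (v : Basis I R M) (A : Matrix I I R) : ExteriorAlgebra R M :=
  ∑ p ∈ Finset.univ.filter (fun p : I × I => p.1 < p.2),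
    A p.1 p.2 • (ExteriorAlgebra.ι R (v p.1) * ExteriorAlgebra.ι R (v p.2))

theorem toTwoVector_mem (v : Basis I R M) (A : Matrix I I R) : toTwoVector v A ∈ ⋀[R]^2 M :=
  Submodule.sum_mem _ fun _ _ => Submodule.smul_mem _ _ <| SetLike.mul_mem_graded
    (ExteriorAlgebra.ι_mem_exteriorPower_one _) (ExteriorAlgebra.ι_mem_exteriorPower_one _)

theorem contractLeft_toTwoVector (v : Basis I R M) {A : Matrix I I R} (hAt : Aᵀ = -A)
    (hAd : ∀ i, A i i = 0) (c : I → R) :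
    contractLeft (v.constr R c) (toTwoVector v A) =
      ExteriorAlgebra.ι R (v.equivFun.symm (c ᵥ* A)) := by
  have hA (i j : I) : A j i = -A i j := by simpa using congrFun (congrFun hAt i) j
  calc contractLeft (v.constr R c) (toTwoVector v A)
      = ∑ p ∈ Finset.univ.filter (fun p : I × I => p.1 < p.2),
          ((c p.1 * A p.1 p.2) • ExteriorAlgebra.ι R (v p.2) +
            (c p.2 * A p.2 p.1) • ExteriorAlgebra.ι R (v p.1)) := by
        rw [toTwoVector, map_sum]
        refine Finset.sum_congr rfl fun p _ => ?_
        rw [map_smul, contractLeft_ι_mul, contractLeft_ι, ← Algebra.commutes, ← Algebra.smul_def,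
          Basis.constr_basis, Basis.constr_basis, hA]
        module
    _ = ∑ p : I × I, (c p.1 * A p.1 p.2) • ExteriorAlgebra.ι R (v p.2) :=
        Finset.sum_filter_lt_add_swap (fun p => (c p.1 * A p.1 p.2) • ExteriorAlgebra.ι R (v p.2))
          (by simp [hAd])
    _ = ExteriorAlgebra.ι R (v.equivFun.symm (c ᵥ* A)) := by
        rw [Basis.equivFun_symm_apply, map_sum, Fintype.sum_prod_type, Finset.sum_comm]
        simp [vecMul, dotProduct, Finset.sum_smul]

end Matrix

/-- Let `K` be a field of characteristic zero, `r` a natural number, `M` a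
`K`-vector space with an ordered basis `v` of length `2r`, and `A` an alternating `2r × 2r`
matrix over `K`.  Set `σ := Σ_{i<j} A_{ij} · v_i ∧ v_j`.  Then `A` is invertible if and only
if `σ^r ≠ 0` in the exterior algebra of `M`. -/
theorem isUnit_iff_wedge_pow_ne_zero {K : Type*} [Field K] [CharZero K] (r : ℕ)
    (M : Type*) [AddCommGroup M] [Module K M] (v : Module.Basis (Fin (2 * r)) K M)
    (A : Matrix (Fin (2 * r)) (Fin (2 * r)) K) (hAt : Aᵀ = -A) (hAd : ∀ i, A i i = 0) :
    IsUnit A ↔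
      (∑ p ∈ Finset.univ.filter (fun p : Fin (2 * r) × Fin (2 * r) => p.1 < p.2),
          A p.1 p.2 • (ExteriorAlgebra.ι K (v p.1) * ExteriorAlgebra.ι K (v p.2))) ^ r ≠ 0 := by
  change IsUnit A ↔ A.toTwoVector v ^ r ≠ 0
  have hσ := A.toTwoVector_mem v
  rw [isUnit_iff_isUnit_det, isUnit_iff_ne_zero]
  constructor
  · intro hdet
    refine ExteriorAlgebra.pow_ne_zero_of_forall_contractLeft_eq_ι v hσ (fun j => ?_) le_rfl
    refine ⟨v.constr K (v.equivFun (v j) ᵥ* A⁻¹), ?_⟩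
    rw [contractLeft_toTwoVector v hAt hAd, vecMul_vecMul, nonsing_inv_mul _ hdet.isUnit,
      vecMul_one, LinearEquiv.symm_apply_apply]
  · contrapose!
    intro hdet
    obtain ⟨w, hw, hwA⟩ := exists_vecMul_eq_zero_iff.mpr hdet
    obtain ⟨k, hk⟩ := Function.ne_iff.mp hw
    have hf : contractLeft (v.constr K w) (A.toTwoVector v) = 0 := by
      rw [contractLeft_toTwoVector v hAt hAd, hwA, map_zero, map_zero]
    have := ExteriorAlgebra.smul_eq_zero_of_contractLeft_eq_zero v
      (ExteriorAlgebra.pow_mem_exteriorPower_two_mul hσ r)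
      (ExteriorAlgebra.contractLeft_pow_eq_zero_of_mem_exteriorPower_two hσ hf r) (v k)
    rw [Basis.constr_basis, smul_eq_zero] at this
    exact this.resolve_left hk
end

section
/- Let R be a commutative ring, p an integer, and G → H → F → 0 a right exact sequence of R-modules with maps α : G → H and β : H → F. Then the sequence G ⊗ ∧^{p−1}H → ∧^p H → ∧^p F → 0 is exact, where the first map sends g ⊗ ω to α(g) ∧ ω and the second map is ∧^p β. -/
/-!
The composite `G ⊗ ⋀^p H → ⋀^(p+1) F` vanishes because `β ∘ α = 0`, and `⋀β` is onto in every
degree because `⋀^n F` is spanned by products of elements of `F = β H`. For the reverse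
inclusion `ker ⋀β ⊆ K`, with `K` the image of `G ⊗ ⋀^p H`, one builds a map
`⋀^(p+1) F → ⋀^(p+1) H ⧸ K` sending `β h₀ ∧ ⋯ ∧ β hₚ` to the class of `h₀ ∧ ⋯ ∧ hₚ`. It is
well defined: changing some `hᵢ` by an element of `ker β = im α` changes `h₀ ∧ ⋯ ∧ hₚ` by a
wedge with a factor in `im α`, which after moving that factor to the front lies in `K`.
Composed with `⋀β` this map is the quotient map, so `⋀β x = 0` forces `x ∈ K`.
-/

open ExteriorAlgebra

namespace AlternatingMap

variable {R M N Q ι : Type*} [CommRing R] [AddCommGroup M] [Module R M]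
  [AddCommGroup N] [Module R N] [AddCommGroup Q] [Module R Q] [Fintype ι]

theorem map_eq_map_of_forall_sub_mem (φ : M [⋀^ι]→ₗ[R] Q) {P : Submodule R M}
    (hφ : ∀ v i, v i ∈ P → φ v = 0) {v w : ι → M} (hvw : ∀ i, w i - v i ∈ P) :
    φ w = φ v := by
  classical
  calc φ w = φ (v + (w - v)) := by rw [add_sub_cancel]
    _ = ∑ s : Finset ι, φ (s.piecewise v (w - v)) := φ.map_add_univ v (w - v)
    _ = φ v := by
      rw [Finset.sum_eq_single Finset.univ, Finset.piecewise_univ]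
      · intro s _ hs
        obtain ⟨i, -, hi⟩ := Finset.exists_of_ssubset (Finset.ssubset_univ_iff.mpr hs)
        exact hφ _ i (by simpa [Finset.piecewise_eq_of_notMem _ _ _ hi] using hvw i)
      · simp

theorem map_eq_map_of_comp_eq (φ : M [⋀^ι]→ₗ[R] Q) {β : M →ₗ[R] N}
    (hφ : ∀ v i, β (v i) = 0 → φ v = 0) {v w : ι → M} (hvw : β ∘ v = β ∘ w) :
    φ v = φ w :=
  φ.map_eq_map_of_forall_sub_mem (P := LinearMap.ker β) hφ fun i => by
    rw [LinearMap.mem_ker, map_sub, sub_eq_zero]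
    exact congrFun hvw i

noncomputable def liftOfSurjective (φ : M [⋀^ι]→ₗ[R] Q) {β : M →ₗ[R] N}
    (hβ : Function.Surjective β) (hφ : ∀ v i, β (v i) = 0 → φ v = 0) :
    N [⋀^ι]→ₗ[R] Q := by
  classical
  let s := Function.surjInv hβ
  have hs : ∀ x, β (s x) = x := Function.surjInv_eq hβ
  exact
  { toFun := fun u => φ (s ∘ u)
    map_update_add' := by
      intro _ u i x y
      rw [φ.map_eq_map_of_comp_eq hφ (w := Function.update (s ∘ u) i (s x + s y)),
        φ.map_update_add, Function.comp_update, Function.comp_update]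
      ext j; simp only [Function.comp_apply, Function.update_apply]; split_ifs <;> simp [hs]
    map_update_smul' := by
      intro _ u i c x
      rw [φ.map_eq_map_of_comp_eq hφ (w := Function.update (s ∘ u) i (c • s x)),
        φ.map_update_smul, Function.comp_update]
      ext j; simp only [Function.comp_apply, Function.update_apply]; split_ifs <;> simp [hs]
    map_eq_zero_of_eq' := fun u i j hij hne =>
      φ.map_eq_zero_of_eq (s ∘ u) (congrArg s hij) hne }

theorem liftOfSurjective_apply_comp (φ : M [⋀^ι]→ₗ[R] Q) {β : M →ₗ[R] N}
    (hβ : Function.Surjective β) (hφ : ∀ v i, β (v i) = 0 → φ v = 0) (v : ι → M) :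
    φ.liftOfSurjective hβ hφ (β ∘ v) = φ v :=
  φ.map_eq_map_of_comp_eq hφ <| funext fun i => Function.surjInv_eq hβ (β (v i))

end AlternatingMap

namespace ExteriorAlgebra

variable {R G H F : Type*} [CommRing R] [AddCommGroup G] [Module R G]
  [AddCommGroup H] [Module R H] [AddCommGroup F] [Module R F]

/-- The image of `G ⊗ ⋀^p H → ⋀^(p+1) H`, `g ⊗ ω ↦ α g ∧ ω`. -/
def rangeMulSpan (α : G →ₗ[R] H) (p : ℕ) : Submodule R (ExteriorAlgebra R H) :=
  Submodule.span R {y | ∃ (g : G) (ω : ExteriorAlgebra R H), ω ∈ ⋀[R]^p H ∧ y = ι R (α g) * ω}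

theorem ιMulti_mem_rangeMulSpan (α : G →ₗ[R] H) {p : ℕ} (v : Fin (p + 1) → H) {i : Fin (p + 1)}
    (hi : v i ∈ LinearMap.range α) : ιMulti R (p + 1) v ∈ rangeMulSpan α p := by
  suffices h : ∀ v : Fin (p + 1) → H, v 0 ∈ LinearMap.range α →
      ιMulti R (p + 1) v ∈ rangeMulSpan α p by
    obtain rfl | hne := eq_or_ne i 0
    · exact h v hi
    · have := h (v ∘ Equiv.swap 0 i) (by simpa using hi)
      rw [AlternatingMap.map_swap _ _ hne.symm] at this
      simpa using neg_mem this
  rintro v ⟨g, hg⟩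
  rw [ιMulti_succ_apply, ← hg]
  exact Submodule.subset_span ⟨g, _, ιMulti_range R p ⟨_, rfl⟩, rfl⟩

theorem map_eq_zero_of_mem_rangeMulSpan {α : G →ₗ[R] H} {β : H →ₗ[R] F} (hαβ : ∀ g, β (α g) = 0)
    {p : ℕ} {x : ExteriorAlgebra R H} (hx : x ∈ rangeMulSpan α p) : map β x = 0 := by
  induction hx using Submodule.span_induction with
  | mem y hy =>
    obtain ⟨g, ω, -, rfl⟩ := hy
    rw [map_mul, map_apply_ι, hαβ, map_zero, zero_mul]
  | zero => exact map_zero _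
  | add y z _ _ hy hz => rw [map_add, hy, hz, add_zero]
  | smul c y _ hy => rw [map_smul, hy, smul_zero]

noncomputable def quotientLift {α : G →ₗ[R] H} {β : H →ₗ[R] F} (hexact : Function.Exact α β)
    (hsurj : Function.Surjective β) (p : ℕ) :
    ExteriorAlgebra R F →ₗ[R] ExteriorAlgebra R H ⧸ rangeMulSpan α p :=
  liftAlternating <| Pi.single (p + 1) <|
    ((rangeMulSpan α p).mkQ.compAlternatingMap (ιMulti R (p + 1))).liftOfSurjective hsurj
      fun v i hi => (Submodule.Quotient.mk_eq_zero _).mpr <|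
        ιMulti_mem_rangeMulSpan α v ((hexact (v i)).mp hi)

theorem quotientLift_map {α : G →ₗ[R] H} {β : H →ₗ[R] F} (hexact : Function.Exact α β)
    (hsurj : Function.Surjective β) {p : ℕ} {x : ExteriorAlgebra R H} (hx : x ∈ ⋀[R]^(p + 1) H) :
    quotientLift hexact hsurj p (map β x) = (rangeMulSpan α p).mkQ x := by
  rw [← ιMulti_span_fixedDegree] at hx
  induction hx using Submodule.span_induction with
  | mem y hy =>
    obtain ⟨v, rfl⟩ := hy
    rw [map_apply_ιMulti, quotientLift, liftAlternating_apply_ιMulti, Pi.single_eq_same]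
    exact AlternatingMap.liftOfSurjective_apply_comp _ hsurj _ v
  | zero => simp only [map_zero]
  | add y z _ _ hy hz => simp only [map_add, hy, hz]
  | smul c y _ hy => simp only [map_smul, hy]

theorem map_eq_zero_iff_mem_rangeMulSpan {α : G →ₗ[R] H} {β : H →ₗ[R] F}
    (hexact : Function.Exact α β) (hsurj : Function.Surjective β) {p : ℕ}
    {x : ExteriorAlgebra R H} (hx : x ∈ ⋀[R]^(p + 1) H) :
    map β x = 0 ↔ x ∈ rangeMulSpan α p := by
  refine ⟨fun h => ?_, map_eq_zero_of_mem_rangeMulSpan hexact.apply_apply_eq_zero⟩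
  have := quotientLift_map hexact hsurj hx
  rwa [h, map_zero, eq_comm, Submodule.mkQ_apply, Submodule.Quotient.mk_eq_zero] at this

theorem map_exteriorPower_of_surjective {β : H →ₗ[R] F} (hsurj : Function.Surjective β) (n : ℕ) :
    Submodule.map (map β).toLinearMap (⋀[R]^n H) = ⋀[R]^n F := by
  rw [Submodule.map_pow, ι_range_map_map, LinearMap.range_eq_top.mpr hsurj, Submodule.map_top]

end ExteriorAlgebra

/-- Let `R` be a commutative ring and `G →α H →β F → 0` a right exact
sequence of `R`-modules.  Then for every (positive) degree `p+1` the sequence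
`G ⊗ ∧^p H → ∧^(p+1) H → ∧^(p+1) F → 0` is exact, where the first map sends `g ⊗ ω` to
`α(g) ∧ ω` and the second map is `∧^(p+1) β`.  Exterior powers are realized as the graded
pieces `⋀[R]^n` of the exterior algebra; the image of the first map is the span of the
products `ι(α g) * ω` with `ω ∈ ⋀[R]^p H`, so exactness in the middle says that the kernel
of `∧ β` on `⋀[R]^(p+1) H` is that span, and exactness at the right-hand end says that
`∧ β` maps `⋀[R]^(p+1) H` onto `⋀[R]^(p+1) F`.  (In negative degrees and degree `0` the
statement is trivial by the conventions `∧^k = 0` for `k < 0`, `∧^0 = R`.) -/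
theorem exteriorPower_right_exact {R G H F : Type*} [CommRing R]
    [AddCommGroup G] [Module R G] [AddCommGroup H] [Module R H]
    [AddCommGroup F] [Module R F]
    (α : G →ₗ[R] H) (β : H →ₗ[R] F)
    (hexact : Function.Exact α β) (hsurj : Function.Surjective β) (p : ℕ) :
    (∀ x ∈ (⋀[R]^(p + 1) H : Submodule R (ExteriorAlgebra R H)),
        (ExteriorAlgebra.map β x = 0 ↔
          x ∈ Submodule.span R {y : ExteriorAlgebra R H |
            ∃ (g : G) (ω : ExteriorAlgebra R H), ω ∈ ⋀[R]^p H ∧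
              y = ExteriorAlgebra.ι R (α g) * ω})) ∧
    Submodule.map (ExteriorAlgebra.map β).toLinearMap (⋀[R]^(p + 1) H) = ⋀[R]^(p + 1) F :=
  ⟨fun _ hx => map_eq_zero_iff_mem_rangeMulSpan hexact hsurj hx,
    map_exteriorPower_of_surjective hsurj (p + 1)⟩
end

section
/- Let A be a Noetherian commutative local ring with maximal-ideal-adic completion Â, and M a finitely generated A-module. Then M is a free A-module if and only if Â ⊗_A M is a free Â-module. -/
open scoped TensorProduct

theorem Module.free_iff_free_tensorProduct_of_faithfullyFlat {R S M : Type*} [CommRing R]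
    [IsLocalRing R] [CommRing S] [Algebra R S] [Module.FaithfullyFlat R S] [AddCommGroup M]
    [Module R M] [Module.FinitePresentation R M] :
    Module.Free R M ↔ Module.Free S (S ⊗[R] M) := by
  refine ⟨fun _ ↦ inferInstance, fun _ ↦ ?_⟩
  have : Module.Flat R M := .of_flat_tensorProduct R M S
  exact Module.free_of_flat_of_isLocalRing

/-- `Â` is flat over the Noetherian ring `A`, and `A → Â` is a local homomorphism. -/
theorem AdicCompletion.faithfullyFlat_of_isLocalRing (A : Type*) [CommRing A]
    [IsNoetherianRing A] [IsLocalRing A] :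
    Module.FaithfullyFlat A (AdicCompletion (IsLocalRing.maximalIdeal A) A) :=
  .of_flat_of_isLocalHom

/-- Let `A` be a Noetherian commutative local ring with maximal-ideal-adic
completion `Â`, and `M` a finitely generated `A`-module.  Then `M` is a free `A`-module if
and only if `Â ⊗[A] M` is a free `Â`-module. -/
theorem free_iff_free_adicCompletion_tensor {A : Type*} [CommRing A] [IsNoetherianRing A]
    [IsLocalRing A] (M : Type*) [AddCommGroup M] [Module A M] [Module.Finite A M] :
    Module.Free A M ↔
      Module.Free (AdicCompletion (IsLocalRing.maximalIdeal A) A)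
        ((AdicCompletion (IsLocalRing.maximalIdeal A) A) ⊗[A] M) := by
  have := AdicCompletion.faithfullyFlat_of_isLocalRing A
  have := Module.finitePresentation_of_finite A M
  exact Module.free_iff_free_tensorProduct_of_faithfullyFlat
end

section
/- Let ((A_k, M_k))_{k∈ℕ} be an inverse system where each A_k is a commutative local ring and M_k a finite free A_k-module, with transition data for l ≤ m consisting of a surjective ring homomorphism θ_{l,m} : A_m → A_l carrying the maximal ideal of A_m into the maximal ideal of A_l, and a θ_{l,m}-semilinear map φ_{l,m} : M_m → M_l such that the induced A_l-linear map A_l ⊗_{A_m} M_m → M_l is an isomorphism. Let (A_∞, M_∞) be the inverse limit. Then M_∞ is a finite free A_∞-module, and for every l the induced map A_l ⊗_{A_∞} M_∞ → M_l is an isomorphism. -/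
/-!
By Nakayama's lemma, any lift along `φ_{k,k+1}` of a basis of `M_k` spans `M_{k+1}`, and since
the ranks agree it is a basis; hence there are compatible bases `e_k` of all the `M_k`. The
compatible families `(e_k i)_k` form a basis of `M_∞` over `A_∞`, because the coordinates of a
compatible family in these bases are themselves compatible. Reading off coordinates at level `l`
gives the kernel of `M_∞ → M_l`, and its surjectivity comes from lifting step by step along the
surjective transition maps.
-/

section

variable {A : ℕ → Type*} [∀ k, CommRing (A k)]
variable (θ : ∀ l m : ℕ, l ≤ m → A m →+* A l)

/-- The inverse limit `A_∞ = lim A_k` of an inverse system of commutative rings indexed by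
`ℕ`, realized as the subring of compatible families in `Π_k A_k`. -/
def ringLimit : Subring (∀ k, A k) where
  carrier := {f | ∀ (l m : ℕ) (h : l ≤ m), θ l m h (f m) = f l}
  mul_mem' := by
    intro a b ha hb l m h
    simp only [Pi.mul_apply, map_mul]
    rw [ha l m h, hb l m h]
  one_mem' := by intro l m h; simp
  add_mem' := by
    intro a b ha hb l m h
    simp only [Pi.add_apply, map_add]
    rw [ha l m h, hb l m h]
  zero_mem' := by intro l m h; simp
  neg_mem' := by
    intro a ha l m h
    simp only [Pi.neg_apply, map_neg]
    rw [ha l m h]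

variable {M : ℕ → Type*} [∀ k, AddCommGroup (M k)] [∀ k, Module (A k) (M k)]
variable (φ : ∀ (l m : ℕ) (h : l ≤ m), M m →ₛₗ[θ l m h] M l)

/-- The inverse limit `M_∞ = lim M_k` of an inverse system of modules over an inverse system
of rings, realized as the additive subgroup of compatible families in `Π_k M_k`. -/
def moduleLimit : AddSubgroup (∀ k, M k) where
  carrier := {x | ∀ (l m : ℕ) (h : l ≤ m), φ l m h (x m) = x l}
  add_mem' := by
    intro a b ha hb l m h
    simp only [Pi.add_apply, map_add]
    rw [ha l m h, hb l m h]
  zero_mem' := by intro l m h; simp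
  neg_mem' := by
    intro a ha l m h
    simp only [Pi.neg_apply, map_neg]
    rw [ha l m h]

instance ringLimit.smul : SMul (ringLimit θ) (moduleLimit θ φ) where
  smul c x := ⟨fun k => (c : ∀ k, A k) k • (x : ∀ k, M k) k, by
    intro l m h
    show φ l m h ((c : ∀ k, A k) m • (x : ∀ k, M k) m) = _
    rw [map_smulₛₗ, c.2 l m h, x.2 l m h]⟩

/-- The limit module `M_∞` is a module over the limit ring `A_∞`. -/
instance ringLimit.module : Module (ringLimit θ) (moduleLimit θ φ) where
  one_smul x := Subtype.ext (funext fun k => one_smul _ _)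
  mul_smul a b x := Subtype.ext (funext fun k => mul_smul _ _ _)
  smul_zero a := Subtype.ext (funext fun k => smul_zero _)
  smul_add a x y := Subtype.ext (funext fun k => smul_add _ _ _)
  add_smul a b x := Subtype.ext (funext fun k => add_smul _ _ _)
  zero_smul x := Subtype.ext (funext fun k => zero_smul _ _)

section

variable {R S P Q : Type*} [CommRing R] [CommRing S] {σ : R →+* S} [RingHomSurjective σ]
  [AddCommGroup P] [Module R P] [AddCommGroup Q] [Module S Q] {f : P →ₛₗ[σ] Q}

open Module Submodule

theorem span_range_eq_top_of_span_range_comp_eq_top [IsLocalRing R] [Nontrivial S]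
    [Module.Finite R P] (hker : LinearMap.ker f ≤ RingHom.ker σ • ⊤) {ι : Type*} {w : ι → P}
    (hw : span S (Set.range (f ∘ w)) = ⊤) : span R (Set.range w) = ⊤ := by
  have hσ : RingHom.ker σ ≤ Ideal.jacobson ⊥ := by
    rw [IsLocalRing.jacobson_eq_maximalIdeal ⊥ bot_ne_top]
    exact IsLocalRing.le_maximalIdeal (RingHom.ker_ne_top σ)
  refine top_le_iff.mp <| le_of_le_smul_of_le_jacobson_bot Module.Finite.fg_top hσ fun z _ => ?_
  rw [Set.range_comp, ← map_span] at hw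
  obtain ⟨y, hy, hyz⟩ := (hw ▸ mem_top : f z ∈ map f (span R (Set.range w)))
  refine mem_sup.mpr ⟨y, hy, z - y, hker ?_, add_sub_cancel y z⟩
  rw [LinearMap.mem_ker, map_sub, hyz, sub_self]

theorem span_range_comp_eq_top (hf : Function.Surjective f) {ι : Type*} {w : ι → P}
    (hw : span R (Set.range w) = ⊤) : span S (Set.range (f ∘ w)) = ⊤ := by
  rw [Set.range_comp, ← map_span, hw, Submodule.map_top, LinearMap.range_eq_top.mpr hf]

variable [IsLocalRing R] [Nontrivial S] [Module.Free R P] [Module.Finite R P]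
  [Module.Free S Q] [Module.Finite S Q]

theorem finrank_eq_of_ker_le_smul_top (hf : Function.Surjective f)
    (hker : LinearMap.ker f ≤ RingHom.ker σ • ⊤) : finrank S Q = finrank R P := by
  apply le_antisymm
  · let b := Module.Free.chooseBasis R P
    conv_rhs => rw [finrank_eq_card_chooseBasisIndex]
    exact finrank_le_of_span_eq_top (span_range_comp_eq_top hf b.span_eq)
  · let b := Module.Free.chooseBasis S Q
    choose w hw using fun i => hf (b i)
    conv_rhs => rw [finrank_eq_card_chooseBasisIndex]
    have hwb : f ∘ w = b := funext hw
    exact finrank_le_of_span_eq_top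
      (span_range_eq_top_of_span_range_comp_eq_top hker (hwb ▸ b.span_eq))

theorem Module.Basis.exists_basis_map_eq (hf : Function.Surjective f)
    (hker : LinearMap.ker f ≤ RingHom.ker σ • ⊤) {ι : Type*} [Fintype ι] (b : Basis ι S Q) :
    ∃ b' : Basis ι R P, ∀ i, f (b' i) = b i := by
  choose w hw using fun i => hf (b i)
  have hwb : f ∘ w = b := funext hw
  have hspan : span R (Set.range w) = ⊤ :=
    span_range_eq_top_of_span_range_comp_eq_top hker (hwb ▸ b.span_eq)
  have hcard : Fintype.card ι = finrank R P := by
    rw [← finrank_eq_of_ker_le_smul_top hf hker, finrank_eq_card_basis b]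
  exact ⟨basisOfTopLeSpanOfCardEqFinrank w hspan.ge hcard, fun i => by
    rw [coe_basisOfTopLeSpanOfCardEqFinrank, hw]⟩

end

theorem Module.Basis.repr_map_of_map_basis {R S P Q ι : Type*} [CommRing R] [CommRing S]
    {σ : R →+* S} [AddCommGroup P] [Module R P] [AddCommGroup Q] [Module S Q] [Fintype ι]
    {f : P →ₛₗ[σ] Q} {b : Basis ι R P} {b' : Basis ι S Q} (hf : ∀ i, f (b i) = b' i)
    (x : P) (i : ι) : b'.repr (f x) i = σ (b.repr x i) := by
  conv_lhs => rw [← b.sum_repr x, map_sum]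
  simp only [map_smulₛₗ, hf, b'.repr_sum_self]

section

variable {θ φ}

theorem mem_moduleLimit_of_forall_succ
    (hφid : ∀ (k : ℕ) (x : M k), φ k k le_rfl x = x)
    (hφcomp : ∀ (l m n : ℕ) (h1 : l ≤ m) (h2 : m ≤ n) (x : M n),
      φ l m h1 (φ m n h2 x) = φ l n (h1.trans h2) x)
    {x : ∀ k, M k} (hx : ∀ k, φ k (k + 1) k.le_succ (x (k + 1)) = x k) :
    x ∈ moduleLimit θ φ := by
  intro l m h
  induction m, h using Nat.le_induction with
  | base => exact hφid l (x l)
  | succ m hlm ih => rw [← ih, ← hx m, hφcomp]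

theorem moduleLimit_eval_surjective
    (hφid : ∀ (k : ℕ) (x : M k), φ k k le_rfl x = x)
    (hφcomp : ∀ (l m n : ℕ) (h1 : l ≤ m) (h2 : m ≤ n) (x : M n),
      φ l m h1 (φ m n h2 x) = φ l n (h1.trans h2) x)
    (hsurj : ∀ k, Function.Surjective (φ k (k + 1) k.le_succ)) (l : ℕ) :
    Function.Surjective (fun x : moduleLimit θ φ => (x : ∀ k, M k) l) := by
  intro y
  let U : ∀ j, M (l + j) := fun j =>
    Nat.rec (motive := fun j => M (l + j)) y (fun j z => Function.surjInv (hsurj (l + j)) z) j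
  have hU : ∀ j, φ (l + j) (l + j + 1) (l + j).le_succ (U (j + 1)) = U j :=
    fun j => Function.surjInv_eq (hsurj (l + j)) (U j)
  have hUy : ∀ j, φ l (l + j) (Nat.le_add_right l j) (U j) = y := by
    intro j
    induction j with
    | zero => exact hφid l y
    | succ j ih => rw [← ih, ← hU j, hφcomp]; rfl
  refine ⟨⟨fun k => φ k (l + k) (Nat.le_add_left k l) (U k),
    mem_moduleLimit_of_forall_succ hφid hφcomp fun k => ?_⟩, hUy l⟩
  show φ k (k + 1) _ (φ (k + 1) (l + k + 1) _ (U (k + 1))) = φ k (l + k) _ (U k)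
  rw [hφcomp, ← hU k, hφcomp]

theorem exists_compatible_bases [∀ k, IsLocalRing (A k)]
    [∀ k, Module.Free (A k) (M k)] [∀ k, Module.Finite (A k) (M k)]
    (hθsurj : ∀ k, Function.Surjective (θ k (k + 1) k.le_succ))
    (hφsurj : ∀ k, Function.Surjective (φ k (k + 1) k.le_succ))
    (hker : ∀ k, LinearMap.ker (φ k (k + 1) k.le_succ) ≤
      RingHom.ker (θ k (k + 1) k.le_succ) • (⊤ : Submodule (A (k + 1)) (M (k + 1))))
    (hφid : ∀ (k : ℕ) (x : M k), φ k k le_rfl x = x)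
    (hφcomp : ∀ (l m n : ℕ) (h1 : l ≤ m) (h2 : m ≤ n) (x : M n),
      φ l m h1 (φ m n h2 x) = φ l n (h1.trans h2) x) :
    ∃ (n : ℕ) (e : ∀ k, Module.Basis (Fin n) (A k) (M k)),
      ∀ l m (h : l ≤ m) i, φ l m h (e m i) = e l i := by
  have hexists (k : ℕ) (b : Module.Basis (Fin (Module.finrank (A 0) (M 0))) (A k) (M k)) :
      ∃ b' : Module.Basis _ (A (k + 1)) (M (k + 1)), ∀ i, φ k (k + 1) _ (b' i) = b i :=
    haveI : RingHomSurjective (θ k (k + 1) k.le_succ) := ⟨hθsurj k⟩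
    b.exists_basis_map_eq (hφsurj k) (hker k)
  choose lift hlift using hexists
  let e : ∀ k, Module.Basis _ (A k) (M k) := fun k =>
    Nat.rec (motive := fun k => Module.Basis _ (A k) (M k)) (Module.finBasis (A 0) (M 0)) lift k
  exact ⟨_, e, fun l m h i =>
    mem_moduleLimit_of_forall_succ (x := fun k => e k i) hφid hφcomp (fun k => hlift k (e k) i)
      l m h⟩

noncomputable def moduleLimitEquivFun {n : ℕ} (e : ∀ k, Module.Basis (Fin n) (A k) (M k))
    (he : ∀ l m (h : l ≤ m) i, φ l m h (e m i) = e l i) :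
    moduleLimit θ φ ≃ₗ[ringLimit θ] (Fin n → ringLimit θ) where
  toFun x i := ⟨fun k => (e k).repr ((x : ∀ k, M k) k) i, fun l m h => by
    show θ l m h ((e m).repr ((x : ∀ k, M k) m) i) = (e l).repr ((x : ∀ k, M k) l) i
    rw [← Module.Basis.repr_map_of_map_basis (he l m h), x.2 l m h]⟩
  map_add' x y := by
    ext i k
    exact congrArg (· i) (map_add (e k).repr _ _)
  map_smul' c x := by
    ext i k
    exact congrArg (· i) (map_smul (e k).repr _ _)
  invFun c := ⟨fun k => ∑ i, (c i : ∀ k, A k) k • e k i, fun l m h => by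
    simp only [map_sum, map_smulₛₗ, he, (c _).2 l m h]⟩
  left_inv x := Subtype.ext <| funext fun k => (e k).sum_repr _
  right_inv c := funext fun i => Subtype.ext <| funext fun k =>
    congrArg (· i) ((e k).repr_sum_self fun i => (c i : ∀ k, A k) k)

theorem moduleLimit_eval_eq_zero_iff {n : ℕ} (e : ∀ k, Module.Basis (Fin n) (A k) (M k))
    (he : ∀ l m (h : l ≤ m) i, φ l m h (e m i) = e l i) (l : ℕ) (x : moduleLimit θ φ) :
    (x : ∀ k, M k) l = 0 ↔
      x ∈ RingHom.ker ((Pi.evalRingHom A l).comp (ringLimit θ).subtype) •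
        (⊤ : Submodule (ringLimit θ) (moduleLimit θ φ)) := by
  constructor
  · intro hx
    let b := Module.Basis.ofEquivFun (moduleLimitEquivFun e he)
    rw [← b.sum_equivFun x]
    refine Submodule.sum_mem _ fun i _ => Submodule.smul_mem_smul ?_ Submodule.mem_top
    show (e l).repr ((x : ∀ k, M k) l) i = 0
    rw [hx, map_zero, Finsupp.zero_apply]
  · intro hx
    refine Submodule.smul_induction_on hx (fun r hr y _ => ?_) (fun y z hy hz => ?_)
    · show (r : ∀ k, A k) l • (y : ∀ k, M k) l = 0
      rw [show (r : ∀ k, A k) l = 0 from hr, zero_smul]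
    · show (y : ∀ k, M k) l + (z : ∀ k, M k) l = 0
      rw [hy, hz, add_zero]

end

/-- The base-change isomorphisms `A_l ⊗_{A_m} M_m ≅ M_l` and `A_l ⊗_{A_∞} M_∞ ≅ M_l` are encoded,
the ring maps being surjective, as: the module map is surjective with kernel
`(ker of the ring map) · M`. -/
theorem moduleLimit_finite_free [∀ k, IsLocalRing (A k)]
    [∀ k, Module.Free (A k) (M k)] [∀ k, Module.Finite (A k) (M k)]
    (hθsurj : ∀ (l m : ℕ) (h : l ≤ m), Function.Surjective (θ l m h))
    (hφid : ∀ (k : ℕ) (x : M k), φ k k le_rfl x = x)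
    (hφcomp : ∀ (l m n : ℕ) (h1 : l ≤ m) (h2 : m ≤ n) (x : M n),
      φ l m h1 (φ m n h2 x) = φ l n (h1.trans h2) x)
    (hbc : ∀ (l m : ℕ) (h : l ≤ m),
      Function.Surjective (φ l m h) ∧
        ∀ x : M m, φ l m h x = 0 ↔
          x ∈ RingHom.ker (θ l m h) • (⊤ : Submodule (A m) (M m))) :
    (Module.Finite (ringLimit θ) (moduleLimit θ φ) ∧
        Module.Free (ringLimit θ) (moduleLimit θ φ)) ∧
      ∀ l : ℕ,
        Function.Surjective (fun x : moduleLimit θ φ => (x : ∀ k, M k) l) ∧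
          ∀ x : moduleLimit θ φ, (x : ∀ k, M k) l = 0 ↔
            x ∈ RingHom.ker ((Pi.evalRingHom A l).comp (ringLimit θ).subtype) •
              (⊤ : Submodule (ringLimit θ) (moduleLimit θ φ)) := by
  have hsucc := fun k => hbc k (k + 1) k.le_succ
  obtain ⟨n, e, he⟩ := exists_compatible_bases (fun k => hθsurj k (k + 1) k.le_succ)
    (fun k => (hsucc k).1) (fun k x hx => ((hsucc k).2 x).mp hx) hφid hφcomp
  let b := Module.Basis.ofEquivFun (moduleLimitEquivFun e he)
  exact ⟨⟨.of_basis b, .of_basis b⟩, fun l =>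
    ⟨moduleLimit_eval_surjective hφid hφcomp (fun k => (hsucc k).1) l,
      moduleLimit_eval_eq_zero_iff e he l⟩⟩

end
end

section
/- Let B → B' be a surjective homomorphism of commutative rings with kernel J, let B → A be a ring homomorphism making A a flat B-module, set A' := A ⊗_B B', and let I be the kernel of the canonical map A → A'. Then for every natural number m, the canonical map (A/I) ⊗_{B/J} (J^m/J^{m+1}) → I^m/I^{m+1} is bijective. -/
/-!
Since `B → B'` is onto, `A' = A/JA`, so `I = JA` and `I^m = J^m A`. Flatness of `A` makes
`A ⊗[B] J^m → A` injective, hence an isomorphism onto `I^m`, and `I^m/I^{m+1}` becomes the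
quotient of `A ⊗[B] J^m` by `I · (A ⊗[B] J^m) = J · (A ⊗[B] J^m)`. The map in question, composed
with the reduction `a ⊗ j ↦ ā ⊗ j̄` from `A ⊗[B] J^m`, is this quotient map; the reduction is
onto and kills `J · (A ⊗[B] J^m)`, so the map is bijective.
-/

open scoped TensorProduct

section

variable (B B' A : Type*) [CommRing B] [CommRing B'] [CommRing A]
  [Algebra B B'] [Algebra B A]

/-- The kernel `J` of the ring homomorphism `B → B'`. -/
noncomputable abbrev kerJ : Ideal B := RingHom.ker (algebraMap B B')

/-- The kernel `I` of the canonical map `A → A' = A ⊗[B] B'`. -/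
noncomputable abbrev kerI : Ideal A :=
  RingHom.ker (Algebra.TensorProduct.includeLeftRingHom : A →+* A ⊗[B] B')

lemma kerJ_le_comap : kerJ B B' ≤ (kerI B B' A).comap (algebraMap B A) := by
  intro j hj
  have hj0 : algebraMap B B' j = 0 := hj
  simp only [Ideal.mem_comap, kerI, RingHom.mem_ker,
    Algebra.TensorProduct.includeLeftRingHom_apply]
  have : (algebraMap B A j) ⊗ₜ[B] (1 : B') = (1 : A) ⊗ₜ[B] (algebraMap B B' j) := by
    rw [Algebra.algebraMap_eq_smul_one, Algebra.algebraMap_eq_smul_one,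
      TensorProduct.smul_tmul]
  rw [this, hj0, TensorProduct.tmul_zero]

/-- The induced ring homomorphism `B/J → A/I`. -/
noncomputable def resQuot : B ⧸ kerJ B B' →+* A ⧸ kerI B B' A :=
  Ideal.quotientMap (kerI B B' A) (algebraMap B A) (kerJ_le_comap B B' A)

noncomputable instance : Algebra (B ⧸ kerJ B B') (A ⧸ kerI B B' A) :=
  (resQuot B B' A).toAlgebra

lemma algebraMap_mem_pow_kerI (m : ℕ) {b : B} (hb : b ∈ kerJ B B' ^ m) :
    algebraMap B A b ∈ kerI B B' A ^ m := by
  have h1 : Ideal.map (algebraMap B A) (kerJ B B' ^ m) ≤ kerI B B' A ^ m := by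
    rw [Ideal.map_pow]
    exact Ideal.pow_right_mono (Ideal.map_le_iff_le_comap.mpr (kerJ_le_comap B B' A)) m
  exact h1 (Ideal.mem_map_of_mem _ hb)

variable (m : ℕ)

/-- `J^m/J^{m+1}`, realized as `J^m ⧸ J•(J^m)`, as a module over `B/J`. -/
noncomputable abbrev grJ :=
  ↥(kerJ B B' ^ m) ⧸ (kerJ B B' • ⊤ : Submodule B ↥(kerJ B B' ^ m))

/-- `I^m/I^{m+1}`, realized as `I^m ⧸ I•(I^m)`, as a module over `A/I`, hence over `B/J`. -/
noncomputable abbrev grI :=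
  ↥(kerI B B' A ^ m) ⧸ (kerI B B' A • ⊤ : Submodule A ↥(kerI B B' A ^ m))

noncomputable instance : Module (B ⧸ kerJ B B') (grI B B' A m) :=
  Module.compHom _ (resQuot B B' A)

lemma kerI_eq_map (hsurj : Function.Surjective (algebraMap B B')) :
    kerI B B' A = (kerJ B B').map (algebraMap B A) := by
  let e : (A ⧸ (kerJ B B').map (algebraMap B A)) ≃ₐ[A] A ⊗[B] B' :=
    (Algebra.TensorProduct.quotIdealMapEquivTensorQuot A (kerJ B B')).trans
      (Algebra.TensorProduct.congr AlgEquiv.refl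
        (Ideal.quotientKerAlgEquivOfSurjective (f := Algebra.ofId B B') hsurj))
  have : (Algebra.TensorProduct.includeLeftRingHom : A →+* A ⊗[B] B') =
      (e : (A ⧸ (kerJ B B').map (algebraMap B A)) →+* A ⊗[B] B').comp (Ideal.Quotient.mk _) :=
    RingHom.ext fun a => (e.commutes a).symm
  rw [kerI, this, RingHom.ker_comp_of_injective _ e.injective, Ideal.mk_ker]

noncomputable def tensorIdealMul (K : Ideal B) : A ⊗[B] K →ₗ[A] A :=
  (Algebra.TensorProduct.rid B A A).toLinearMap ∘ₗ K.subtype.baseChange A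

lemma tensorIdealMul_tmul (K : Ideal B) (a : A) (k : K) :
    tensorIdealMul B A K (a ⊗ₜ k) = a * algebraMap B A k := by
  simp [tensorIdealMul, Algebra.smul_def, mul_comm]

lemma tensorIdealMul_injective [Module.Flat B A] (K : Ideal B) :
    Function.Injective (tensorIdealMul B A K) :=
  (Algebra.TensorProduct.rid B A A).injective.comp <| by
    rw [LinearMap.baseChange_eq_ltensor]
    exact Module.Flat.lTensor_preserves_injective_linearMap _ K.injective_subtype

lemma range_tensorIdealMul (K : Ideal B) :
    LinearMap.range (tensorIdealMul B A K) = K.map (algebraMap B A) := by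
  refine le_antisymm ?_ (Ideal.map_le_iff_le_comap.mpr fun k hk => ⟨1 ⊗ₜ ⟨k, hk⟩, ?_⟩)
  · rintro _ ⟨t, rfl⟩
    induction t using TensorProduct.induction_on with
    | zero => simp
    | tmul a k =>
      rw [tensorIdealMul_tmul]
      exact Ideal.mul_mem_left _ a (Ideal.mem_map_of_mem _ k.2)
    | add t₁ t₂ h₁ h₂ => rw [map_add]; exact add_mem h₁ h₂
  · rw [tensorIdealMul_tmul, one_mul]

noncomputable def tensorIdealEquivMap [Module.Flat B A] (K : Ideal B) :
    A ⊗[B] K ≃ₗ[A] K.map (algebraMap B A) :=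
  (LinearEquiv.ofInjective _ (tensorIdealMul_injective B A K)).trans
    (LinearEquiv.ofEq _ _ (range_tensorIdealMul B A K))

lemma tensorIdealEquivMap_tmul [Module.Flat B A] (K : Ideal B) (a : A) (k : K) :
    (tensorIdealEquivMap B A K (a ⊗ₜ k) : A) = a * algebraMap B A k :=
  tensorIdealMul_tmul B A K a k

noncomputable def tensorKerJPowEquiv [Module.Flat B A]
    (hsurj : Function.Surjective (algebraMap B B')) :
    A ⊗[B] ↥(kerJ B B' ^ m) ≃ₗ[A] ↥(kerI B B' A ^ m) :=
  (tensorIdealEquivMap B A _).trans <| LinearEquiv.ofEq _ _ <| by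
    rw [kerI_eq_map B B' A hsurj, Ideal.map_pow]

lemma tensorKerJPowEquiv_tmul [Module.Flat B A] (hsurj : Function.Surjective (algebraMap B B'))
    (a : A) (b : ↥(kerJ B B' ^ m)) :
    (tensorKerJPowEquiv B B' A m hsurj (a ⊗ₜ b) : A) = a * algebraMap B A b :=
  tensorIdealEquivMap_tmul B A _ a b

instance : IsScalarTower B (B ⧸ kerJ B B') (A ⧸ kerI B B' A) :=
  IsScalarTower.of_algebraMap_eq fun _ => rfl

noncomputable def reduceTensor :
    A ⊗[B] ↥(kerJ B B' ^ m) →ₗ[B] (A ⧸ kerI B B' A) ⊗[B ⧸ kerJ B B'] grJ B B' m :=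
  TensorProduct.mapOfCompatibleSMul (B ⧸ kerJ B B') B B _ _ ∘ₗ
    TensorProduct.map (Ideal.Quotient.mkₐ B (kerI B B' A)).toLinearMap (Submodule.mkQ _)

lemma reduceTensor_tmul (a : A) (b : ↥(kerJ B B' ^ m)) :
    reduceTensor B B' A m (a ⊗ₜ b) =
      Ideal.Quotient.mk (kerI B B' A) a ⊗ₜ (Submodule.Quotient.mk b : grJ B B' m) :=
  rfl

lemma reduceTensor_surjective : Function.Surjective (reduceTensor B B' A m) :=
  (TensorProduct.mapOfCompatibleSMul_surjective (B ⧸ kerJ B B') B B _ _).comp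
    (TensorProduct.map_surjective Ideal.Quotient.mk_surjective (Submodule.mkQ_surjective _))

lemma smul_top_le_ker_reduceTensor :
    (kerJ B B' • ⊤ : Submodule B (A ⊗[B] ↥(kerJ B B' ^ m))) ≤
      LinearMap.ker (reduceTensor B B' A m) := by
  refine Submodule.smul_le.mpr fun j hj t _ => ?_
  rw [LinearMap.mem_ker, map_smul,
    ← algebraMap_smul (B ⧸ kerJ B B') j (reduceTensor B B' A m t),
    Ideal.Quotient.algebraMap_eq, Ideal.Quotient.eq_zero_iff_mem.mpr hj, zero_smul]

lemma reduceTensor_eq_zero_of_mem_smul_top (hsurj : Function.Surjective (algebraMap B B'))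
    {t : A ⊗[B] ↥(kerJ B B' ^ m)} (ht : t ∈ (kerI B B' A • ⊤ : Submodule A _)) :
    reduceTensor B B' A m t = 0 := by
  rw [kerI_eq_map B B' A hsurj, ← Submodule.restrictScalars_mem B,
    Submodule.restrictScalars_map_smul_eq, Submodule.restrictScalars_top] at ht
  exact smul_top_le_ker_reduceTensor B B' A m ht

/-- Let `B → B'` be a surjective homomorphism of commutative rings with
kernel `J`, let `B → A` be a ring homomorphism making `A` a flat `B`-module, set
`A' := A ⊗[B] B'`, and let `I` be the kernel of the canonical map `A → A'`.  Then for every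
natural number `m`, the canonical map `(A/I) ⊗_{B/J} (J^m/J^{m+1}) → I^m/I^{m+1}`,
`a ⊗ j ↦ class of a·j`, is bijective. -/
theorem tensor_ker_graded_bijective [Module.Flat B A]
    (hsurj : Function.Surjective (algebraMap B B'))
    (Ψ : ((A ⧸ kerI B B' A) ⊗[B ⧸ kerJ B B'] grJ B B' m) →ₗ[B ⧸ kerJ B B']
      grI B B' A m)
    (hΨ : ∀ (a : A) (b : ↥(kerJ B B' ^ m)),
      Ψ (Ideal.Quotient.mk (kerI B B' A) a ⊗ₜ Submodule.Quotient.mk b) =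
        Submodule.Quotient.mk
          ⟨a * algebraMap B A (b : B),
            Ideal.mul_mem_left _ a (algebraMap_mem_pow_kerI B B' A m b.2)⟩) :
    Function.Bijective Ψ := by
  let e := tensorKerJPowEquiv B B' A m hsurj
  let f : A ⊗[B] ↥(kerJ B B' ^ m) →ₗ[A] grI B B' A m := Submodule.mkQ _ ∘ₗ e.toLinearMap
  have hf : ∀ t, Ψ (reduceTensor B B' A m t) = f t := by
    intro t
    induction t using TensorProduct.induction_on with
    | zero => simp only [map_zero]
    | tmul a b =>
      rw [reduceTensor_tmul, hΨ]
      exact congrArg _ (Subtype.ext (tensorKerJPowEquiv_tmul B B' A m hsurj a b).symm)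
    | add t₁ t₂ h₁ h₂ => rw [map_add, map_add, h₁, h₂, map_add]
  have hker : LinearMap.ker f = kerI B B' A • ⊤ := by
    rw [LinearMap.ker_comp, Submodule.ker_mkQ,
      Submodule.comap_smul_top_of_surjective _ _ e.surjective, LinearEquiv.ker, sup_bot_eq]
  refine ⟨(injective_iff_map_eq_zero Ψ).2 fun x hx => ?_, fun y => ?_⟩
  · obtain ⟨t, rfl⟩ := reduceTensor_surjective B B' A m x
    rw [hf, ← LinearMap.mem_ker, hker] at hx
    exact reduceTensor_eq_zero_of_mem_smul_top B B' A m hsurj hx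
  · obtain ⟨t, rfl⟩ := (Submodule.mkQ_surjective _).comp e.surjective y
    exact ⟨reduceTensor B B' A m t, hf t⟩

end
end

section
/- Let K be a field of characteristic zero, V a finite-dimensional K-vector space, q a quadratic form on V with polar bilinear form b (so q(u+v) = q(u) + q(v) + b(u,v)), and x ∈ V with q(x) ≠ 0. Define the quadratic form q' on V by q'(y) := b(x,y)² − 4·q(x)·q(y). Then the rank of q' equals rank(q) − 1, and x lies in the radical of q'. -/
/-!
The polar form of `q'` is `2 (b(x,u) b(x,v) - b(x,x) b(u,v))`, i.e. `-2 b(x,x)` times `b`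
precomposed with the projection of `V` onto the hyperplane `H = ker b(x, -)` along `x`. So its
range is the image of `H` under `v ↦ b(v, -)`, and since `H` contains the kernel of `b`, passing
from `V` to `H` lowers the rank by exactly one.
-/

open Module

namespace Module

variable {R M : Type*} [CommRing R] [AddCommGroup M] [Module R M]

theorem range_preReflection_of_apply_eq_one {x : M} {f : Dual R M} (hfx : f x = 1) :
    LinearMap.range (preReflection x f) = LinearMap.ker f := by
  apply le_antisymm
  · rintro _ ⟨y, rfl⟩
    simp [preReflection_apply, hfx]
  · intro y hy
    exact ⟨y, by simp [preReflection_apply, LinearMap.mem_ker.mp hy]⟩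

end Module

namespace LinearMap

variable {K V W : Type*} [Field K] [AddCommGroup V] [Module K V] [AddCommGroup W] [Module K W]

theorem finrank_map_add_finrank_ker_of_ker_le [FiniteDimensional K V] (f : V →ₗ[K] W)
    {H : Submodule K V} (hH : ker f ≤ H) :
    finrank K (H.map f) + finrank K (ker f) = finrank K H := by
  have := finrank_range_add_finrank_ker (f.domRestrict H)
  rwa [range_domRestrict, ker_domRestrict,
    (Submodule.comapSubtypeEquivOfLe hH).finrank_eq] at this

theorem BilinForm.finrank_range_smulRight_sub_add_one [FiniteDimensional K V]
    {B : LinearMap.BilinForm K V} (hB : B.IsRefl) {x : V} (hx : B x x ≠ 0) :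
    finrank K (range ((B x).smulRight (B x) - B x x • B)) + 1 = finrank K (range B) := by
  set P := preReflection x ((B x x)⁻¹ • B x)
  have hP : range P = ker (B x) := by
    rw [range_preReflection_of_apply_eq_one (by simp [hx]), ker_smul _ _ (inv_ne_zero hx)]
  have hcomp : (B x).smulRight (B x) - B x x • B = -B x x • (B ∘ₗ P) := by
    ext u v
    simp only [LinearMap.sub_apply, coe_smulRight, LinearMap.smul_apply, smul_eq_mul, coe_comp,
      Function.comp_apply, preReflection_apply, map_sub, map_smul, neg_smul, LinearMap.neg_apply, P]
    field_simp
    ring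
  have hker : ker B ≤ ker (B x) := fun z hz =>
    hB z x (by simp [mem_ker.mp hz])
  have hmap := finrank_map_add_finrank_ker_of_ker_le B hker
  have hrank := finrank_range_add_finrank_ker B
  have hhyperplane := Dual.finrank_ker_add_one_of_ne_zero (f := B x) fun h => hx (by simp [h])
  rw [hcomp, range_smul _ _ (neg_ne_zero.mpr hx), range_comp, hP]
  omega

end LinearMap

namespace QuadraticMap

variable {R M : Type*} [CommRing R] [AddCommGroup M] [Module R M]

theorem polarBilin_eq_of_apply_eq_polar_sq_sub {q q' : QuadraticMap R M R} {x : M}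
    (hq' : ∀ y, q' y = polar q x y ^ 2 - 4 * q x * q y) :
    polarBilin q' = (2 : R) • ((polarBilin q x).smulRight (polarBilin q x)
      - polarBilin q x x • polarBilin q) := by
  ext u v
  have hxx : polar q x x = 2 * q x := by rw [polar_self, two_smul, two_mul]
  simp only [LinearMap.smul_apply, LinearMap.sub_apply, LinearMap.smulRight_apply,
    polarBilin_apply_apply, smul_eq_mul]
  rw [polar, hq', hq', hq', polar_add_right, hxx]
  simp only [polar]
  ring

end QuadraticMap

/-- Let `K` be a field of characteristic zero, `V` a finite-dimensional
`K`-vector space, `q` a quadratic form on `V` with polar bilinear form `b`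
(so `q(u+v) = q(u) + q(v) + b(u,v)`), and `x ∈ V` with `q(x) ≠ 0`.  Let `q'` be the
quadratic form on `V` given by `q'(y) = b(x,y)² − 4·q(x)·q(y)`.  Then the rank of `q'`
equals `rank(q) − 1` (stated as `rank q' + 1 = rank q`), and `x` lies in the radical of
`q'`, i.e. `q'(x) = 0` and the polar form of `q'` pairs `x` trivially with every vector. -/
theorem rank_discriminant_form {K : Type*} [Field K] [CharZero K]
    (V : Type*) [AddCommGroup V] [Module K V] [FiniteDimensional K V]
    (q : QuadraticForm K V) (x : V) (hx : q x ≠ 0)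
    (q' : QuadraticForm K V)
    (hq' : ∀ y : V, q' y = QuadraticMap.polar q x y ^ 2 - 4 * q x * q y) :
    LinearMap.rank (QuadraticMap.polarBilin q') + 1 =
        LinearMap.rank (QuadraticMap.polarBilin q) ∧
      q' x = 0 ∧ ∀ w : V, QuadraticMap.polar q' x w = 0 := by
  have hpolar := QuadraticMap.polarBilin_eq_of_apply_eq_polar_sq_sub hq'
  have hxx : QuadraticMap.polar q x x = 2 * q x := by
    rw [QuadraticMap.polar_self, two_smul, two_mul]
  refine ⟨?_, by rw [hq', hxx]; ring, fun w => ?_⟩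
  · have hrefl : (QuadraticMap.polarBilin q).IsRefl := fun u v h => by
      rwa [QuadraticMap.polarBilin_apply_apply, QuadraticMap.polar_comm] at h
    have hBx : QuadraticMap.polarBilin q x x ≠ 0 := by
      rw [QuadraticMap.polarBilin_apply_apply, hxx]
      exact mul_ne_zero two_ne_zero hx
    rw [hpolar, LinearMap.rank, LinearMap.rank, LinearMap.range_smul _ _ two_ne_zero,
      ← finrank_eq_rank, ← finrank_eq_rank]
    exact_mod_cast LinearMap.BilinForm.finrank_range_smulRight_sub_add_one hrefl hBx
  · rw [← QuadraticMap.polarBilin_apply_apply, hpolar]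
    simp only [LinearMap.smul_apply, LinearMap.sub_apply, LinearMap.smulRight_apply,
      QuadraticMap.polarBilin_apply_apply, smul_eq_mul]
    ring
end

section
/- Let A be a commutative ℂ-algebra, V a finite-dimensional ℂ-vector subspace of A, r ≥ 1 a natural number, and q a complex quadratic form on V of rank at least 2. Assume there exists c ∈ V with c^{2r} ≠ 0 in A, and assume that for every x ∈ V with q(x) = 0 one has x^{r+1} = 0 in A. Then for every x ∈ V: q(x) = 0 if and only if x^{r+1} = 0 if and only if x^{2r} = 0. In particular the three subsets Q = {[x] ∈ ℙ(V) : q(x) = 0}, R = {[x] : x^{r+1} = 0}, and S = {[x] : x^{2r} = 0} coincide. -/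
/-!
If `x` and `y` are anisotropic and `q` is non-degenerate on the plane they span, that plane is
spanned by two isotropic vectors `u`, `v`, and `x`, `y` are combinations of `u`, `v` with nonzero
coefficients. Since `u ^ (r + 1) = v ^ (r + 1) = 0`, the binomial expansion of
`(a • u + b • v) ^ (2 * r)` collapses to its middle term, so
`x ^ (2 * r) = 0 ↔ u ^ r * v ^ r = 0 ↔ y ^ (2 * r) = 0`.
Rank at least two makes `y ↦ discrim (q y) (polar q x y) (q x)` a nonzero quadratic form for
anisotropic `x`, so some `z` forms such a plane with `x` and with `c` at once: every anisotropic
`x` then has `x ^ (2 * r) ≠ 0`, like `c`.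
-/

namespace QuadraticMap

variable {K V : Type*} [Field K] [AddCommGroup V] [Module K V]

theorem map_add_smul (Q : QuadraticMap K V K) (x y : V) (t : K) :
    Q (x + t • y) = Q y * (t * t) + polar Q x y * t + Q x := by
  rw [QuadraticMap.map_add Q, QuadraticMap.map_smul, polar_smul_right, smul_eq_mul, smul_eq_mul]
  ring

open Polynomial in
theorem finite_setOf_map_add_smul_eq_zero {Q : QuadraticMap K V K} {x y : V}
    (h : Q x ≠ 0 ∨ Q y ≠ 0) : {t : K | Q (x + t • y) = 0}.Finite := by
  set p : K[X] := C (Q y) * X ^ 2 + C (polar Q x y) * X + C (Q x)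
  have hp : p ≠ 0 := by
    intro hp
    rcases h with h | h
    · exact h (by simpa [p] using congr_arg (coeff · 0) hp)
    · exact h (by simpa [p] using congr_arg (coeff · 2) hp)
  refine (p.finite_setOfPred_isRoot hp).subset fun t ht => ?_
  simp only [p, Set.mem_ofPred_eq, IsRoot.def, eval_add, eval_mul, eval_C, eval_X, eval_pow]
  linear_combination (map_add_smul Q x y t).symm.trans ht

theorem exists_forall_map_ne_zero [Infinite K] (s : Finset (QuadraticMap K V K))
    (hs : ∀ Q ∈ s, Q ≠ 0) : ∃ z, ∀ Q ∈ s, Q z ≠ 0 := by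
  classical
  induction s using Finset.induction_on with
  | empty => exact ⟨0, by simp⟩
  | insert Q s _ ih =>
    obtain ⟨x, hx⟩ := ih fun Q' hQ' => hs Q' (Finset.mem_insert_of_mem hQ')
    obtain ⟨y, hy⟩ : ∃ y, Q y ≠ 0 := by
      simpa using DFunLike.ne_iff.mp (hs Q (Finset.mem_insert_self Q s))
    have hbad : (⋃ Q' ∈ insert Q s, {t : K | Q' (x + t • y) = 0}).Finite := by
      refine (insert Q s).finite_toSet.biUnion fun Q' hQ' => finite_setOf_map_add_smul_eq_zero ?_
      rcases Finset.mem_insert.mp hQ' with rfl | hQ'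
      exacts [Or.inr hy, Or.inl (hx Q' hQ')]
    obtain ⟨t, ht⟩ := hbad.infinite_compl.nonempty
    exact ⟨x + t • y, fun Q' hQ' h => ht (Set.mem_biUnion hQ' h)⟩

/-- `Q.discrimForm x y` is the discriminant of `t ↦ Q (x + t • y)`; it vanishes unless `Q` is
non-degenerate on the plane spanned by `x` and `y`. -/
def discrimForm (Q : QuadraticMap K V K) (x : V) : QuadraticMap K V K :=
  linMulLin (polarBilin Q x) (polarBilin Q x) - (4 * Q x) • Q

theorem discrimForm_apply (Q : QuadraticMap K V K) (x y : V) :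
    Q.discrimForm x y = discrim (Q y) (polar Q x y) (Q x) := by
  simp only [discrimForm, sub_apply, linMulLin_apply, polarBilin_apply_apply, smul_apply,
    smul_eq_mul, discrim]
  ring

theorem rank_polarBilin_le_one_of_forall_eq_mul_sq {Q : QuadraticMap K V K} (ℓ : V →ₗ[K] K)
    (a : K) (h : ∀ w, Q w = a * ℓ w ^ 2) : LinearMap.rank (polarBilin Q) ≤ 1 := by
  have hrange : LinearMap.range (polarBilin Q) ≤ K ∙ ℓ := by
    rintro _ ⟨z, rfl⟩
    refine Submodule.mem_span_singleton.2 ⟨2 * a * ℓ z, LinearMap.ext fun w => ?_⟩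
    simp only [LinearMap.smul_apply, polarBilin_apply_apply, polar, h, map_add, smul_eq_mul]
    ring
  calc LinearMap.rank (polarBilin Q) ≤ Module.rank K (K ∙ ℓ) := Submodule.rank_mono hrange
    _ ≤ 1 := (rank_span_le _).trans (Cardinal.mk_singleton _).le

theorem discrimForm_ne_zero [NeZero (2 : K)] {Q : QuadraticMap K V K}
    (hrank : 2 ≤ LinearMap.rank (polarBilin Q)) {x : V} (hx : Q x ≠ 0) :
    Q.discrimForm x ≠ 0 := by
  intro h
  have h4 : (4 : K) ≠ 0 := by
    rw [show (4 : K) = 2 * 2 by norm_num]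
    exact mul_ne_zero two_ne_zero two_ne_zero
  suffices LinearMap.rank (polarBilin Q) ≤ 1 from absurd (hrank.trans this) (by norm_num)
  refine rank_polarBilin_le_one_of_forall_eq_mul_sq (polarBilin Q x) (4 * Q x)⁻¹ fun w => ?_
  have hw : discrim (Q w) (polar Q x w) (Q x) = 0 := by rw [← discrimForm_apply, h, zero_apply]
  rw [discrim] at hw
  rw [polarBilin_apply_apply]
  field_simp
  linear_combination -hw

theorem ne_zero_of_map_smul_add_smul_ne_zero {Q : QuadraticMap K V K} {u v : V} (hu : Q u = 0)
    (hv : Q v = 0) {a b : K} (h : Q (a • u + b • v) ≠ 0) : a ≠ 0 ∧ b ≠ 0 := by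
  constructor <;> rintro rfl <;> simp [QuadraticMap.map_smul, hu, hv] at h

theorem exists_isotropic_of_discrimForm_ne_zero [IsAlgClosed K] [NeZero (2 : K)]
    {Q : QuadraticMap K V K} {x y : V} (hy : Q y ≠ 0) (hd : Q.discrimForm x y ≠ 0) :
    ∃ u v : V, Q u = 0 ∧ Q v = 0 ∧
      (∃ a b : K, x = a • u + b • v) ∧ ∃ a b : K, y = a • u + b • v := by
  obtain ⟨s, hs⟩ := IsAlgClosed.exists_eq_mul_self (Q.discrimForm x y)
  rw [discrimForm_apply] at hs hd
  have hs0 : s ≠ 0 := by rintro rfl; simp_all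
  set t₁ := (-polar Q x y + s) / (2 * Q y)
  set t₂ := (-polar Q x y - s) / (2 * Q y)
  have hu : Q (x + t₁ • y) = 0 := by rw [map_add_smul, quadratic_eq_zero_iff hy hs]; simp [t₁]
  have hv : Q (x + t₂ • y) = 0 := by rw [map_add_smul, quadratic_eq_zero_iff hy hs]; simp [t₂]
  have ht : t₁ - t₂ ≠ 0 := by
    rw [show t₁ - t₂ = s / Q y by simp only [t₁, t₂]; field_simp; ring]
    exact div_ne_zero hs0 hy
  refine ⟨_, _, hu, hv, ⟨-t₂ / (t₁ - t₂), t₁ / (t₁ - t₂), ?_⟩,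
    (t₁ - t₂)⁻¹, -(t₁ - t₂)⁻¹, ?_⟩ <;> match_scalars <;> field_simp <;> ring

end QuadraticMap

section PowerVanishing

variable {A : Type*} [CommRing A]

theorem add_pow_two_mul_of_pow_succ_eq_zero {u v : A} {r : ℕ} (hu : u ^ (r + 1) = 0)
    (hv : v ^ (r + 1) = 0) : (u + v) ^ (2 * r) = (2 * r).choose r * (u ^ r * v ^ r) := by
  rw [add_pow, Finset.sum_eq_single r]
  · rw [show 2 * r - r = r by omega]
    ring
  · intro k _ hkr
    rcases lt_or_gt_of_ne hkr with hk | hk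
    · rw [pow_eq_zero_of_le (by omega) hv, mul_zero, zero_mul]
    · rw [pow_eq_zero_of_le (by omega) hu, zero_mul, zero_mul]
  · exact fun h => absurd (Finset.mem_range.2 (by omega)) h

variable {K : Type*} [Field K] [Algebra K A]

theorem smul_add_smul_pow_two_mul_eq_zero_iff [CharZero K] {u v : A} {r : ℕ}
    (hu : u ^ (r + 1) = 0) (hv : v ^ (r + 1) = 0) {a b : K} (ha : a ≠ 0) (hb : b ≠ 0) :
    (a • u + b • v) ^ (2 * r) = 0 ↔ u ^ r * v ^ r = 0 := by
  have hexpand : (a • u + b • v) ^ (2 * r) =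
      ((2 * r).choose r * a ^ r * b ^ r : K) • (u ^ r * v ^ r) := by
    rw [add_pow_two_mul_of_pow_succ_eq_zero (by rw [smul_pow, hu, smul_zero])
      (by rw [smul_pow, hv, smul_zero])]
    simp only [Algebra.smul_def, map_mul, map_pow, map_natCast]
    ring
  have hchoose : ((2 * r).choose r : K) ≠ 0 := Nat.cast_ne_zero.2 (Nat.choose_pos (by omega)).ne'
  rw [hexpand, smul_eq_zero_iff_right (by positivity)]

theorem pow_two_mul_eq_zero_iff_of_discrimForm_ne_zero [IsAlgClosed K] [CharZero K]
    {V : Submodule K A} {Q : QuadraticForm K V} {r : ℕ}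
    (hQ : ∀ x : V, Q x = 0 → (x : A) ^ (r + 1) = 0) {x y : V} (hx : Q x ≠ 0) (hy : Q y ≠ 0)
    (hd : Q.discrimForm x y ≠ 0) : (x : A) ^ (2 * r) = 0 ↔ (y : A) ^ (2 * r) = 0 := by
  obtain ⟨u, v, hu, hv, ⟨a, b, rfl⟩, a', b', rfl⟩ :=
    QuadraticMap.exists_isotropic_of_discrimForm_ne_zero hy hd
  obtain ⟨ha, hb⟩ := QuadraticMap.ne_zero_of_map_smul_add_smul_ne_zero hu hv hx
  obtain ⟨ha', hb'⟩ := QuadraticMap.ne_zero_of_map_smul_add_smul_ne_zero hu hv hy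
  simp only [Submodule.coe_add, Submodule.coe_smul]
  rw [smul_add_smul_pow_two_mul_eq_zero_iff (hQ u hu) (hQ v hv) ha hb,
    smul_add_smul_pow_two_mul_eq_zero_iff (hQ u hu) (hQ v hv) ha' hb']

end PowerVanishing

theorem quadric_eq_power_vanishing_locus_general {A : Type*} [CommRing A] [Algebra ℂ A]
    (V : Submodule ℂ A) (r : ℕ) (hr : 1 ≤ r)
    (q : QuadraticForm ℂ V)
    (hrank : (2 : Cardinal) ≤ LinearMap.rank (QuadraticMap.polarBilin q))
    (hc : ∃ c : V, (c : A) ^ (2 * r) ≠ 0)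
    (hQR : ∀ x : V, q x = 0 → (x : A) ^ (r + 1) = 0) :
    ∀ x : V, (q x = 0 ↔ (x : A) ^ (r + 1) = 0) ∧ (q x = 0 ↔ (x : A) ^ (2 * r) = 0) := by
  classical
  obtain ⟨c, hc⟩ := hc
  have hpow : ∀ x : V, (x : A) ^ (r + 1) = 0 → (x : A) ^ (2 * r) = 0 :=
    fun x => pow_eq_zero_of_le (by omega)
  have hqc : q c ≠ 0 := fun h => hc (hpow c (hQR c h))
  have hanisotropic : ∀ x : V, q x ≠ 0 → (x : A) ^ (2 * r) ≠ 0 := by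
    intro x hx
    obtain ⟨z, hz⟩ := QuadraticMap.exists_forall_map_ne_zero
      {q, q.discrimForm x, q.discrimForm c} (by
        simp only [Finset.mem_insert, Finset.mem_singleton]
        rintro _ (rfl | rfl | rfl)
        exacts [fun h => hqc (by rw [h, zero_apply]),
          QuadraticMap.discrimForm_ne_zero hrank hx, QuadraticMap.discrimForm_ne_zero hrank hqc])
    simp only [Finset.mem_insert, Finset.mem_singleton, forall_eq_or_imp, forall_eq] at hz
    rwa [ne_eq, pow_two_mul_eq_zero_iff_of_discrimForm_ne_zero hQR hx hz.1 hz.2.1,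
      ← pow_two_mul_eq_zero_iff_of_discrimForm_ne_zero hQR hqc hz.1 hz.2.2]
  intro x
  have hback : (x : A) ^ (2 * r) = 0 → q x = 0 := fun h => by_contra fun hx => hanisotropic x hx h
  exact ⟨⟨hQR x, fun h => hback (hpow x h)⟩, ⟨fun h => hpow x (hQR x h), hback⟩⟩

/-- Let `A` be a commutative `ℂ`-algebra, `V` a finite-dimensional
`ℂ`-vector subspace of `A`, `r ≥ 1` a natural number, and `q` a complex quadratic form on
`V` of rank at least `2`.  Assume there exists `c ∈ V` with `c^(2r) ≠ 0` in `A`, and that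
every `x ∈ V` with `q(x) = 0` satisfies `x^(r+1) = 0` in `A`.  Then for every `x ∈ V`:
`q(x) = 0` iff `x^(r+1) = 0` iff `x^(2r) = 0`; in particular the corresponding quadric,
the locus `{x^(r+1) = 0}`, and the locus `{x^(2r) = 0}` coincide in `ℙ(V)`. -/
theorem quadric_eq_power_vanishing_locus {A : Type*} [CommRing A] [Algebra ℂ A]
    (V : Submodule ℂ A) [FiniteDimensional ℂ V] (r : ℕ) (hr : 1 ≤ r)
    (q : QuadraticForm ℂ V)
    (hrank : (2 : Cardinal) ≤ LinearMap.rank (QuadraticMap.polarBilin q))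
    (hc : ∃ c : V, (c : A) ^ (2 * r) ≠ 0)
    (hQR : ∀ x : V, q x = 0 → (x : A) ^ (r + 1) = 0) :
    ∀ x : V, (q x = 0 ↔ (x : A) ^ (r + 1) = 0) ∧ (q x = 0 ↔ (x : A) ^ (2 * r) = 0) :=
  quadric_eq_power_vanishing_locus_general V r hr q hrank hc hQR
end

section
/- Let A be a commutative ring, r ≥ 1 a natural number, and w, v, b, λ, λ' ∈ A satisfying w^{r+1} = 0, v^{r+1} = 0, b·v^r = 0, b³·v^{r−1} = 0, and w^r·b = 0. Set a := λw + b + λ'v. Then 2·a^{r+1}·v^{r−1} = (r+1)·λ^{r−1}·( r·w^{r−1}·v^{r−1}·b² + 2·λλ'·w^r·v^r ) in A. -/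
/-! Expand `a = (λw + b) + λ'v` binomially in `λ'v`, then `λw + b` binomially in `b`.
Against the given power of `v`, each vanishing hypothesis `y^(k+1) z = 0` truncates such
an expansion `(x + y)^n z` after its `y^k` term; of the surviving terms only the
`w^(r-1) b²` and `w^r v^r` ones are nonzero. -/

section TruncatedBinomial

variable {R : Type*} [CommSemiring R] {x y z : R}

theorem add_pow_mul_of_mul_eq_zero (h : y * z = 0) (n : ℕ) : (x + y) ^ n * z = x ^ n * z := by
  induction n with
  | zero => simp
  | succ n ih =>
    calc (x + y) ^ (n + 1) * z = x * ((x + y) ^ n * z) + (x + y) ^ n * (y * z) := by ring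
      _ = x ^ (n + 1) * z := by rw [ih, h]; ring

theorem add_pow_succ_mul_of_sq_mul_eq_zero (h : y ^ 2 * z = 0) (n : ℕ) :
    (x + y) ^ (n + 1) * z = x ^ (n + 1) * z + (n + 1) * x ^ n * y * z := by
  induction n with
  | zero => push_cast; ring
  | succ n ih =>
    calc (x + y) ^ (n + 2) * z = (x + y) * ((x + y) ^ (n + 1) * z) := by ring
      _ = x ^ (n + 2) * z + (n + 2) * x ^ (n + 1) * y * z + (n + 1) * x ^ n * (y ^ 2 * z) := by
        rw [ih]; ring
      _ = _ := by rw [h]; push_cast; ring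

/-- Doubled, so that the coefficient `(n + 2).choose 2` appears without division. -/
theorem two_mul_add_pow_add_two_mul_of_pow_three_mul_eq_zero (h : y ^ 3 * z = 0) (n : ℕ) :
    2 * ((x + y) ^ (n + 2) * z) = 2 * x ^ (n + 2) * z + 2 * (n + 2) * x ^ (n + 1) * y * z +
      (n + 2) * (n + 1) * x ^ n * y ^ 2 * z := by
  induction n with
  | zero => ring
  | succ n ih =>
    calc 2 * ((x + y) ^ (n + 3) * z) = (x + y) * (2 * ((x + y) ^ (n + 2) * z)) := by ring
      _ = 2 * x ^ (n + 3) * z + 2 * (n + 3) * x ^ (n + 2) * y * z +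
          (n + 3) * (n + 2) * x ^ (n + 1) * y ^ 2 * z +
          (n + 2) * (n + 1) * x ^ n * (y ^ 3 * z) := by
        rw [ih]; ring
      _ = _ := by rw [h]; push_cast; ring

end TruncatedBinomial

/-- Let `A` be a commutative ring, `r ≥ 1`, and `w, v, b, λ, λ' ∈ A`
satisfying `w^(r+1) = 0`, `v^(r+1) = 0`, `b·v^r = 0`, `b³·v^(r−1) = 0`, and `w^r·b = 0`.
Set `a := λw + b + λ'v`.  Then
`2·a^(r+1)·v^(r−1) = (r+1)·λ^(r−1)·( r·w^(r−1)·v^(r−1)·b² + 2·λλ'·w^r·v^r )`. -/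
theorem fujiki_relation_identity {A : Type*} [CommRing A] (r : ℕ) (hr : 1 ≤ r)
    (w v b lam lam' : A) (hw : w ^ (r + 1) = 0) (hv : v ^ (r + 1) = 0)
    (hbv : b * v ^ r = 0) (hbbv : b ^ 3 * v ^ (r - 1) = 0) (hwb : w ^ r * b = 0) :
    2 * ((lam * w + b + lam' * v) ^ (r + 1) * v ^ (r - 1)) =
      ((r : A) + 1) * lam ^ (r - 1) *
        ((r : A) * (w ^ (r - 1) * v ^ (r - 1) * b ^ 2) +
          2 * (lam * lam') * (w ^ r * v ^ r)) := by
  obtain ⟨m, rfl⟩ : ∃ m, r = m + 1 := ⟨r - 1, by omega⟩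
  rw [Nat.add_sub_cancel] at hbbv ⊢
  have hv_sq : (lam' * v) ^ 2 * v ^ m = 0 := by
    rw [mul_pow, mul_assoc, ← pow_add, add_comm, hv, mul_zero]
  have first_order := add_pow_succ_mul_of_sq_mul_eq_zero (x := lam * w + b) hv_sq (m + 1)
  have no_b : (lam * w + b) ^ (m + 1) * v ^ (m + 1) = (lam * w) ^ (m + 1) * v ^ (m + 1) :=
    add_pow_mul_of_mul_eq_zero hbv _
  have second_order :=
    two_mul_add_pow_add_two_mul_of_pow_three_mul_eq_zero (x := lam * w) hbbv m
  rw [first_order]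
  push_cast
  linear_combination second_order + 2 * (m + 2) * lam' * no_b +
    2 * lam ^ (m + 2) * v ^ m * hw + 2 * (m + 2) * lam ^ (m + 1) * v ^ m * hwb
end
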